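/- arXiv:1802.06537 — 5 statements merged into one kernel-verified Lean document; each statement's English description precedes it below -/
import Mathlib

section
/- Let n ≥ 2 and let p : ℕ → [0,1] satisfy D^{n−1}·p(D) → ∞ as D → ∞. Then for the random set G of the graded model M(n,D,p), the probability that G contains a witness set tends to 1 as D → ∞; here a witness set is a subset L ⊆ G with exactly n elements such that L is dominant and no element of G strongly divides the componentwise maximum lcm(L) of the elements of L. -/
open Finset Filter

/-- The set `Ω_D` of exponent vectors of degree `D` in `n` variables. -/
def degSet (n D : ℕ) : Finset (Fin n → ℕ) := Finset.Nat.antidiagonalTuple n D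

/-- Probability of the event `E` under the graded model `M(n,D,p)`. -/
noncomputable def grmPr (n D : ℕ) (p : ℝ) (E : Set (Finset (Fin n → ℕ))) : ℝ :=
  ∑ G ∈ (degSet n D).powerset,
    Set.indicator E (fun _ => 1) G * (p ^ G.card * (1 - p) ^ ((degSet n D).card - G.card))

/-- `β` strongly divides `γ`. -/
def StronglyDivides {n : ℕ} (β γ : Fin n → ℕ) : Prop :=
  ∀ i, β i ≠ 0 → β i < γ i

/-- A finite set `L ⊆ ℕ^n` is dominant if every `α ∈ L` has a coordinate `i`
with `α i` strictly bigger than `β i` for every other `β ∈ L`. -/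
def DominantSet {n : ℕ} (L : Finset (Fin n → ℕ)) : Prop :=
  ∀ α ∈ L, ∃ i, ∀ β ∈ L, β ≠ α → β i < α i

/-- The componentwise maximum (exponent vector of the lcm) of the elements of `L`. -/
def lcmVec {n : ℕ} (L : Finset (Fin n → ℕ)) : Fin n → ℕ :=
  fun i => L.sup fun β => β i

/-- `L` is a witness set for `G`: `L ⊆ G`, `L` is dominant, `|L| = n`, and no element
of `G` strongly divides `lcm L`. -/
def IsWitnessSet (n : ℕ) (G L : Finset (Fin n → ℕ)) : Prop :=
  L ⊆ G ∧ DominantSet L ∧ L.card = n ∧ ∀ g ∈ G, ¬ StronglyDivides g (lcmVec L)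

/-!
Write `n = k + 1`, treat coordinate `0` as a pivot and call `∑ i, α i.succ` the tail sum. A pattern
is a family of disjoint boxes together with a set to avoid; in the Bernoulli model `G` meets every
box and misses the avoided set with probability `(1 - p)^|avoid| * ∏ (1 - (1 - p)^|box|)`, and
patterns with disjoint supports are realised independently. So `K` disjoint patterns, each forcing
a witness set and each realised with probability at least `β`, give a witness set with
probability at least `1 - (1 - β)^K`; it remains to find such patterns with `β` depending only on
`n` and `K → ∞`.

If `(3k)^k p ≤ 1/2`, let `δ` be maximal with `(3kδ)^k p ≤ 1/2`, so that `δ^k p` is bounded below.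
In the shell of exponents with tail coordinates below `u + 3δ` and tail sum at least `ku` take the
corner box (tail coordinates in `[u, u + δ)`) and, for each tail coordinate `j`, the peak box
(coordinate `j` in `[u + 2δ, u + 3δ)`, the others in `[u + δ, u + 2δ)`), and avoid the rest of the
shell. The avoided set has at most `(3kδ)^k` points, so it is missed with probability `≥ 1/2`, each
box of `δ^k` points is hit with probability bounded below, and `D^k p → ∞` leaves room for
`K → ∞` disjoint shells.

Otherwise `p` is bounded below, and for `|c| = D - 1` the `n` points `c + eᵢ` form a witness set as
soon as they all lie in `G`, which happens with probability `p^n`.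
-/

section BernoulliSubset

variable {V : Type*} (p : ℝ)

noncomputable def bernExp (S : Finset V) (h : Finset V → ℝ) : ℝ :=
  ∑ G ∈ S.powerset, h G * (p ^ G.card * (1 - p) ^ (S.card - G.card))

theorem grmPr_eq_bernExp (n D : ℕ) (E : Set (Finset (Fin n → ℕ))) :
    grmPr n D p E = bernExp p (degSet n D) (E.indicator fun _ => 1) := rfl

variable {p}

theorem bernExp_congr {S : Finset V} {h h' : Finset V → ℝ} (hh : ∀ G ⊆ S, h G = h' G) :
    bernExp p S h = bernExp p S h' :=
  Finset.sum_congr rfl fun G hG => by rw [hh G (mem_powerset.1 hG)]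

theorem bernExp_mono (hp : p ∈ Set.Icc (0 : ℝ) 1) {S : Finset V} {h h' : Finset V → ℝ}
    (hh : ∀ G ⊆ S, h G ≤ h' G) : bernExp p S h ≤ bernExp p S h' :=
  Finset.sum_le_sum fun G hG => mul_le_mul_of_nonneg_right (hh G (mem_powerset.1 hG))
    (mul_nonneg (pow_nonneg hp.1 _) (pow_nonneg (sub_nonneg.2 hp.2) _))

theorem bernExp_const (S : Finset V) (c : ℝ) : bernExp p S (fun _ => c) = c := by
  rw [bernExp, ← Finset.mul_sum, sum_pow_mul_eq_add_pow, add_sub_cancel, one_pow, mul_one]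

theorem bernExp_const_sub (S : Finset V) (c : ℝ) (h : Finset V → ℝ) :
    bernExp p S (fun G => c - h G) = c - bernExp p S h := by
  simp only [bernExp, sub_mul, Finset.sum_sub_distrib]
  rw [← bernExp, bernExp_const]

theorem bernExp_union_mul [DecidableEq V] {A B : Finset V} (hAB : Disjoint A B)
    (f g : Finset V → ℝ) :
    bernExp p (A ∪ B) (fun G => f (G ∩ A) * g (G ∩ B)) = bernExp p A f * bernExp p B g := by
  rw [bernExp, bernExp, bernExp, Finset.sum_mul_sum, ← Finset.sum_product']
  refine Finset.sum_nbij' (fun G => (G ∩ A, G ∩ B)) (fun XY => XY.1 ∪ XY.2) ?_ ?_ ?_ ?_ ?_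
  · intro G _
    simp [Finset.inter_subset_right]
  · intro XY hXY
    simp only [Finset.mem_product, mem_powerset] at hXY ⊢
    exact Finset.union_subset_union hXY.1 hXY.2
  · intro G hG
    simp only [mem_powerset] at hG
    simp [← Finset.inter_union_distrib_left, Finset.inter_eq_left.2 hG]
  · intro XY hXY
    obtain ⟨X, Y⟩ := XY
    simp only [Finset.mem_product, mem_powerset] at hXY
    have hXB : X ∩ B = ∅ := Finset.disjoint_iff_inter_eq_empty.1 (hAB.mono_left hXY.1)
    have hYA : Y ∩ A = ∅ := Finset.disjoint_iff_inter_eq_empty.1 (hAB.symm.mono_left hXY.2)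
    simp [Finset.union_inter_distrib_right, Finset.inter_eq_left.2 hXY.1,
      Finset.inter_eq_left.2 hXY.2, hXB, hYA]
  · intro G hG
    have hGA : (G ∩ A).card ≤ A.card := Finset.card_le_card Finset.inter_subset_right
    have hGB : (G ∩ B).card ≤ B.card := Finset.card_le_card Finset.inter_subset_right
    have hG : G.card = (G ∩ A).card + (G ∩ B).card := by
      rw [← Finset.card_union_of_disjoint (hAB.mono Finset.inter_subset_right
        Finset.inter_subset_right), ← Finset.inter_union_distrib_left,
        Finset.inter_eq_left.2 (mem_powerset.1 hG)]
    rw [Finset.card_union_of_disjoint hAB, hG,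
      show A.card + B.card - ((G ∩ A).card + (G ∩ B).card)
        = (A.card - (G ∩ A).card) + (B.card - (G ∩ B).card) by omega]
    ring

theorem bernExp_inter_of_subset [DecidableEq V] {R S : Finset V} (hRS : R ⊆ S)
    (h : Finset V → ℝ) : bernExp p S (fun G => h (G ∩ R)) = bernExp p R h := by
  have key := bernExp_union_mul (p := p) (Finset.disjoint_sdiff (s := R) (t := S)) h (fun _ => 1)
  simpa only [Finset.union_sdiff_of_subset hRS, bernExp_const, mul_one] using key

theorem bernExp_biUnion_prod [DecidableEq V] {ι : Type*} (T : Finset ι) {R : ι → Finset V}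
    (hR : (T : Set ι).PairwiseDisjoint R) (h : ι → Finset V → ℝ) :
    bernExp p (T.biUnion R) (fun G => ∏ t ∈ T, h t (G ∩ R t))
      = ∏ t ∈ T, bernExp p (R t) (h t) := by
  classical
  induction T using Finset.induction_on with
  | empty => simp [bernExp_const]
  | @insert t T ht ih =>
    rw [Finset.coe_insert, Set.pairwiseDisjoint_insert_of_notMem (by simpa using ht)] at hR
    have hdisj : Disjoint (R t) (T.biUnion R) :=
      (Finset.disjoint_biUnion_right _ _ _).2 fun s hs => hR.2 s hs
    rw [Finset.prod_insert ht, ← ih hR.1, ← bernExp_union_mul hdisj, Finset.biUnion_insert]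
    refine bernExp_congr fun G _ => ?_
    rw [Finset.prod_insert ht]
    congr 1
    refine Finset.prod_congr rfl fun s hs => ?_
    rw [Finset.inter_assoc, Finset.inter_eq_right.2 (Finset.subset_biUnion_of_mem R hs)]

theorem bernExp_prod [DecidableEq V] {ι : Type*} {T : Finset ι} {R : ι → Finset V}
    {S : Finset V} (hR : (T : Set ι).PairwiseDisjoint R) (hRS : ∀ t ∈ T, R t ⊆ S)
    (h : ι → Finset V → ℝ) :
    bernExp p S (fun G => ∏ t ∈ T, h t (G ∩ R t)) = ∏ t ∈ T, bernExp p (R t) (h t) := by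
  rw [← bernExp_biUnion_prod T hR, ← bernExp_inter_of_subset (Finset.biUnion_subset.2 hRS)]
  refine bernExp_congr fun G _ => Finset.prod_congr rfl fun t ht => ?_
  rw [Finset.inter_assoc, Finset.inter_eq_right.2 (Finset.subset_biUnion_of_mem R ht)]

theorem bernExp_indicator_le_one (hp : p ∈ Set.Icc (0 : ℝ) 1) (S : Finset V)
    (E : Set (Finset V)) : bernExp p S (E.indicator fun _ => 1) ≤ 1 :=
  (bernExp_mono hp fun G _ => Set.indicator_le_self' (fun _ _ => zero_le_one) G).trans_eq
    (bernExp_const S 1)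

theorem bernExp_ite_eq_empty [DecidableEq V] (S : Finset V) :
    bernExp p S (fun H => if H = ∅ then 1 else 0) = (1 - p) ^ S.card := by
  rw [bernExp, Finset.sum_eq_single ∅ (fun G _ hG => by simp [hG])
    (fun h => absurd (Finset.empty_mem_powerset S) h)]
  simp

theorem bernExp_ite_nonempty [DecidableEq V] (S : Finset V) :
    bernExp p S (fun H => if H.Nonempty then 1 else 0) = 1 - (1 - p) ^ S.card := by
  rw [← bernExp_ite_eq_empty, ← bernExp_const_sub]
  refine bernExp_congr fun H _ => ?_
  by_cases hH : H = ∅ <;> simp [hH, Finset.nonempty_iff_ne_empty]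

end BernoulliSubset

theorem grmPr_le_one {n D : ℕ} {p : ℝ} (hp : p ∈ Set.Icc (0 : ℝ) 1)
    (E : Set (Finset (Fin n → ℕ))) : grmPr n D p E ≤ 1 :=
  bernExp_indicator_le_one hp _ E

structure Pattern (V ι : Type*) where
  avoid : Finset V
  hit : ι → Finset V

namespace Pattern

section Probability

variable {V ι : Type*} [Fintype ι] (P : Pattern V ι)

noncomputable def prob (p : ℝ) : ℝ :=
  (1 - p) ^ P.avoid.card * ∏ i, (1 - (1 - p) ^ (P.hit i).card)

variable {P} {p : ℝ}

theorem le_prob (hp : p ∈ Set.Icc (0 : ℝ) 1) {A B : ℕ}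
    (hA : P.avoid.card ≤ A) (hB : ∀ i, B ≤ (P.hit i).card) :
    (1 - p) ^ A * (1 - (1 - p) ^ B) ^ Fintype.card ι ≤ P.prob p := by
  have hq0 : 0 ≤ 1 - p := sub_nonneg.2 hp.2
  have hq1 : 1 - p ≤ 1 := by linarith [hp.1]
  have hfac : ∀ N : ℕ, 0 ≤ 1 - (1 - p) ^ N := fun N => sub_nonneg.2 (pow_le_one₀ hq0 hq1)
  rw [prob, ← Finset.card_univ, ← Finset.prod_const]
  exact mul_le_mul (pow_le_pow_of_le_one hq0 hq1 hA)
    (Finset.prod_le_prod (fun _ _ => hfac B) fun i _ =>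
      sub_le_sub_left (pow_le_pow_of_le_one hq0 hq1 (hB i)) 1)
    (Finset.prod_nonneg fun _ _ => hfac B) (pow_nonneg hq0 _)

end Probability

variable {V ι τ : Type*} [DecidableEq V] [Fintype ι] (P : Pattern V ι)

def support : Finset V := P.avoid ∪ univ.biUnion P.hit

def IsSeparated : Prop :=
  Disjoint P.avoid (univ.biUnion P.hit) ∧ Pairwise (Function.onFun Disjoint P.hit)

def Occurs (G : Finset V) : Prop := Disjoint G P.avoid ∧ ∀ i, (G ∩ P.hit i).Nonempty

theorem hit_subset_support (i : ι) : P.hit i ⊆ P.support :=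
  Finset.subset_union_right.trans' (Finset.subset_biUnion_of_mem P.hit (mem_univ i))

theorem avoid_subset_support : P.avoid ⊆ P.support := Finset.subset_union_left

theorem occurs_inter_support_iff {G : Finset V} : P.Occurs (G ∩ P.support) ↔ P.Occurs G := by
  simp only [Occurs, Finset.disjoint_iff_inter_eq_empty, Finset.inter_assoc,
    Finset.inter_eq_right.2 (P.hit_subset_support _),
    Finset.inter_eq_right.2 P.avoid_subset_support]

variable {P} {p : ℝ}

theorem bernExp_indicator_occurs (hP : P.IsSeparated) :
    bernExp p P.support ({G | P.Occurs G}.indicator fun _ => 1) = P.prob p := by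
  have hind : ∀ G, ({G | P.Occurs G}.indicator fun _ => (1 : ℝ)) G
      = (if G ∩ P.avoid = ∅ then 1 else 0)
        * ∏ i, if ((G ∩ univ.biUnion P.hit) ∩ P.hit i).Nonempty then 1 else 0 := by
    intro G
    simp only [Finset.inter_assoc, Finset.inter_eq_right.2
      (Finset.subset_biUnion_of_mem P.hit (mem_univ _)), Finset.prod_boole, mem_univ,
      true_implies, ← Finset.disjoint_iff_inter_eq_empty, Set.indicator_apply, Set.mem_ofPred_eq,
      Occurs]
    split_ifs <;> simp_all
  rw [support, bernExp_congr fun G _ => hind G,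
    bernExp_union_mul hP.1 (fun H => if H = ∅ then 1 else 0)
      (fun H => ∏ i, if (H ∩ P.hit i).Nonempty then 1 else 0), bernExp_ite_eq_empty,
    bernExp_biUnion_prod _ (hP.2.set_pairwise _) (fun _ H => if H.Nonempty then 1 else 0), prob]
  simp only [bernExp_ite_nonempty]

theorem prob_le_one (hp : p ∈ Set.Icc (0 : ℝ) 1) (hP : P.IsSeparated) : P.prob p ≤ 1 :=
  bernExp_indicator_occurs hP ▸ bernExp_indicator_le_one hp _ _

/-- Patterns with disjoint supports are realised independently. -/
theorem one_sub_pow_le_bernExp (hp : p ∈ Set.Icc (0 : ℝ) 1) {T : Finset τ}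
    {P : τ → Pattern V ι} {Ω : Finset V} {W : Set (Finset V)} {β : ℝ}
    (hsep : ∀ t ∈ T, (P t).IsSeparated)
    (hdisj : (T : Set τ).PairwiseDisjoint fun t => (P t).support)
    (hΩ : ∀ t ∈ T, (P t).support ⊆ Ω) (hW : ∀ G ⊆ Ω, ∀ t ∈ T, (P t).Occurs G → G ∈ W)
    (hβ : ∀ t ∈ T, β ≤ (P t).prob p) :
    1 - (1 - β) ^ T.card ≤ bernExp p Ω (W.indicator fun _ => 1) := by
  set miss : τ → Finset V → ℝ := fun t H => 1 - {G | (P t).Occurs G}.indicator (fun _ => 1) H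
  have hmiss : ∀ t ∈ T, bernExp p (P t).support (miss t) = 1 - (P t).prob p := fun t ht => by
    rw [bernExp_const_sub, bernExp_indicator_occurs (hsep t ht)]
  have hpoint : ∀ G ⊆ Ω, 1 - ∏ t ∈ T, miss t (G ∩ (P t).support)
      ≤ W.indicator (fun _ => 1) G := by
    intro G hG
    by_cases hocc : ∃ t ∈ T, (P t).Occurs G
    · obtain ⟨t, ht, hGt⟩ := hocc
      rw [Set.indicator_of_mem (hW G hG t ht hGt), Finset.prod_eq_zero ht]
      · simp
      · simp [miss, (P t).occurs_inter_support_iff.2 hGt]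
    · rw [Finset.prod_eq_one fun t ht => ?_, sub_self]
      · exact Set.indicator_nonneg (fun _ _ => zero_le_one) G
      · simpa [miss, (P t).occurs_inter_support_iff] using fun h => hocc ⟨t, ht, h⟩
  calc 1 - (1 - β) ^ T.card
      ≤ 1 - ∏ t ∈ T, (1 - (P t).prob p) := by
        rw [← Finset.prod_const]
        exact sub_le_sub_left (Finset.prod_le_prod (fun t ht => sub_nonneg.2
          (prob_le_one hp (hsep t ht))) fun t ht => sub_le_sub_left (hβ t ht) 1) 1
    _ = bernExp p Ω (fun G => 1 - ∏ t ∈ T, miss t (G ∩ (P t).support)) := by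
        rw [bernExp_const_sub, bernExp_prod hdisj hΩ, Finset.prod_congr rfl hmiss]
    _ ≤ bernExp p Ω (W.indicator fun _ => 1) := bernExp_mono hp hpoint

end Pattern

theorem mem_degSet {n D : ℕ} {α : Fin n → ℕ} : α ∈ degSet n D ↔ ∑ i, α i = D :=
  Finset.Nat.mem_antidiagonalTuple

section Witness

variable {n : ℕ}

section Diagonal

variable {f : Fin n → Fin n → ℕ}

theorem lcmVec_image_of_diag (hdiag : ∀ i k, k ≠ i → f k i < f i i) :
    lcmVec (univ.image f) = fun i => f i i := by
  funext i
  refine le_antisymm (Finset.sup_le fun β hβ => ?_) (Finset.le_sup (f := fun β => β i)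
    (Finset.mem_image_of_mem f (mem_univ i)))
  obtain ⟨k, -, rfl⟩ := Finset.mem_image.1 hβ
  rcases eq_or_ne k i with rfl | hki
  · exact le_rfl
  · exact (hdiag i k hki).le

theorem injective_of_diag (hdiag : ∀ i k, k ≠ i → f k i < f i i) : Function.Injective f :=
  fun k i hki => by_contra fun hne => (hdiag i k hne).ne (congrFun hki i)

theorem dominantSet_image_of_diag (hdiag : ∀ i k, k ≠ i → f k i < f i i) :
    DominantSet (univ.image f) := by
  simp only [DominantSet, Finset.mem_image, mem_univ, true_and, forall_exists_index,
    forall_apply_eq_imp_iff]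
  exact fun i => ⟨i, fun k hki => hdiag i k fun h => hki (h ▸ rfl)⟩

theorem isWitnessSet_image_of_diag {G : Finset (Fin n → ℕ)}
    (hdiag : ∀ i k, k ≠ i → f k i < f i i) (hG : ∀ i, f i ∈ G)
    (hno : ∀ g ∈ G, ¬ StronglyDivides g fun i => f i i) :
    IsWitnessSet n G (univ.image f) := by
  refine ⟨?_, dominantSet_image_of_diag hdiag, ?_, ?_⟩
  · simpa [Finset.image_subset_iff] using hG
  · rw [Finset.card_image_of_injective _ (injective_of_diag hdiag), card_univ, Fintype.card_fin]
  · rwa [lcmVec_image_of_diag hdiag]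

end Diagonal

/-- Everything strongly dividing `c + 𝟙` lies below `c`, so it has degree `< D`. -/
theorem exists_isWitnessSet_of_add_single {D : ℕ} {c : Fin n → ℕ} (hc : ∑ i, c i < D)
    {G : Finset (Fin n → ℕ)} (hG : G ⊆ degSet n D) (hocc : ∀ i, c + Pi.single i 1 ∈ G) :
    ∃ L, IsWitnessSet n G L := by
  set f : Fin n → Fin n → ℕ := fun k => c + Pi.single k 1
  have hdiag : ∀ i k, k ≠ i → f k i < f i i := fun i k hki => by
    simp [f, Ne.symm hki]
  refine ⟨_, isWitnessSet_image_of_diag hdiag hocc fun g hg hdiv => ?_⟩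
  have hle : ∀ i, g i ≤ c i := fun i => by
    by_cases hgi : g i = 0
    · exact hgi ▸ Nat.zero_le _
    · simpa [f] using hdiv i hgi
  have := Finset.sum_le_sum fun i (_ : i ∈ univ) => hle i
  rw [mem_degSet.1 (hG hg)] at this
  omega

end Witness

section Tail

variable {k D : ℕ}

def tailSum (α : Fin (k + 1) → ℕ) : ℕ := ∑ i : Fin k, α i.succ

theorem head_add_tailSum {α : Fin (k + 1) → ℕ} (hα : α ∈ degSet (k + 1) D) :
    α 0 + tailSum α = D := by
  rw [tailSum, ← Fin.sum_univ_succ, mem_degSet.1 hα]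

def tailBox (k D : ℕ) (I : Fin k → Finset ℕ) : Finset (Fin (k + 1) → ℕ) :=
  (degSet (k + 1) D).filter fun α => ∀ i, α i.succ ∈ I i

theorem card_tailBox_le (I : Fin k → Finset ℕ) :
    (tailBox k D I).card ≤ ∏ i, (I i).card := by
  rw [← Fintype.card_piFinset]
  refine Finset.card_le_card_of_injOn Fin.tail (fun α hα => ?_) fun α hα β hβ hαβ => ?_
  · simpa [tailBox, Fin.tail] using (Finset.mem_filter.1 hα).2
  · have hα' := head_add_tailSum (Finset.mem_filter.1 hα).1
    have hβ' := head_add_tailSum (Finset.mem_filter.1 hβ).1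
    have htail : tailSum α = tailSum β := congrArg (fun y : Fin k → ℕ => ∑ i, y i) hαβ
    rw [← Fin.cons_self_tail α, ← Fin.cons_self_tail β, hαβ, show α 0 = β 0 by omega]

theorem le_card_tailBox (I : Fin k → Finset ℕ)
    (hI : ∀ y ∈ Fintype.piFinset I, ∑ i, y i ≤ D) :
    ∏ i, (I i).card ≤ (tailBox k D I).card := by
  rw [← Fintype.card_piFinset]
  refine Finset.card_le_card_of_injOn (fun y => Fin.cons (D - ∑ i, y i) y)
    (fun y hy => ?_) fun y _ z _ hyz => by simpa using congrArg Fin.tail hyz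
  simp only [Finset.mem_coe, Fintype.mem_piFinset] at hy
  simp only [Finset.mem_coe, tailBox, Finset.mem_filter, mem_degSet, Fin.sum_univ_succ,
    Fin.cons_zero, Fin.cons_succ]
  exact ⟨Nat.sub_add_cancel (hI y (Fintype.mem_piFinset.2 hy)), hy⟩

end Tail

section Sparse

variable {k D δ u : ℕ}

def cornerBox (k D δ u : ℕ) : Finset (Fin (k + 1) → ℕ) := tailBox k D fun _ => Ico u (u + δ)

def peakBox (k D δ u : ℕ) (j : Fin k) : Finset (Fin (k + 1) → ℕ) :=
  tailBox k D fun i => if i = j then Ico (u + 2 * δ) (u + 3 * δ) else Ico (u + δ) (u + 2 * δ)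

def shell (k D δ u : ℕ) : Finset (Fin (k + 1) → ℕ) :=
  (degSet (k + 1) D).filter fun α => (∀ i : Fin k, α i.succ < u + 3 * δ) ∧ k * u ≤ tailSum α

theorem mem_cornerBox {α : Fin (k + 1) → ℕ} :
    α ∈ cornerBox k D δ u ↔
      α ∈ degSet (k + 1) D ∧ ∀ i : Fin k, u ≤ α i.succ ∧ α i.succ < u + δ := by
  simp [cornerBox, tailBox]

theorem mem_peakBox {α : Fin (k + 1) → ℕ} {j : Fin k} (hα : α ∈ peakBox k D δ u j) :
    α ∈ degSet (k + 1) D ∧ (u + 2 * δ ≤ α j.succ ∧ α j.succ < u + 3 * δ) ∧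
      ∀ i : Fin k, i ≠ j → u + δ ≤ α i.succ ∧ α i.succ < u + 2 * δ := by
  simp only [peakBox, tailBox, Finset.mem_filter] at hα
  refine ⟨hα.1, by simpa using hα.2 j, fun i hij => by simpa [hij] using hα.2 i⟩

theorem mem_shell {α : Fin (k + 1) → ℕ} :
    α ∈ shell k D δ u ↔
      α ∈ degSet (k + 1) D ∧ (∀ i : Fin k, α i.succ < u + 3 * δ) ∧ k * u ≤ tailSum α :=
  Finset.mem_filter

theorem le_tailSum {α : Fin (k + 1) → ℕ} (h : ∀ i : Fin k, u ≤ α i.succ) : k * u ≤ tailSum α := by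
  simpa [tailSum] using Finset.card_nsmul_le_sum univ (fun i : Fin k => α i.succ) u fun i _ => h i

theorem tailSum_lt {α : Fin (k + 1) → ℕ} {c : ℕ} (hk : 0 < k) (h : ∀ i : Fin k, α i.succ < c) :
    tailSum α < k * c := by
  have : Nonempty (Fin k) := ⟨⟨0, hk⟩⟩
  simpa [tailSum] using Finset.sum_lt_sum_of_nonempty univ_nonempty fun i (_ : i ∈ univ) => h i

theorem cornerBox_subset_shell : cornerBox k D δ u ⊆ shell k D δ u := fun α hα => by
  obtain ⟨hα, hbox⟩ := mem_cornerBox.1 hα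
  exact mem_shell.2 ⟨hα, fun i => by have := hbox i; omega, le_tailSum fun i => (hbox i).1⟩

theorem peakBox_subset_shell (j : Fin k) : peakBox k D δ u j ⊆ shell k D δ u := fun α hα => by
  obtain ⟨hα, hj, hi⟩ := mem_peakBox hα
  have hbounds : ∀ i : Fin k, u + δ ≤ α i.succ ∧ α i.succ < u + 3 * δ := fun i => by
    rcases eq_or_ne i j with rfl | hij
    · omega
    · have := hi i hij; omega
  exact mem_shell.2 ⟨hα, fun i => (hbounds i).2, le_tailSum fun i => by
    have := hbounds i; omega⟩

theorem disjoint_cornerBox_peakBox (j : Fin k) :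
    Disjoint (cornerBox k D δ u) (peakBox k D δ u j) :=
  Finset.disjoint_left.2 fun α hα hα' => by
    have := (mem_cornerBox.1 hα).2 j
    have := (mem_peakBox hα').2.1
    omega

theorem disjoint_peakBox {i j : Fin k} (hij : i ≠ j) :
    Disjoint (peakBox k D δ u i) (peakBox k D δ u j) :=
  Finset.disjoint_left.2 fun α hα hα' => by
    have := (mem_peakBox hα).2.1
    have := (mem_peakBox hα').2.2 i hij
    omega

theorem disjoint_shell (hk : 0 < k) {u' : ℕ} (huu' : u + 3 * δ ≤ u') :
    Disjoint (shell k D δ u) (shell k D δ u') :=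
  Finset.disjoint_left.2 fun α hα hα' => by
    have h1 := tailSum_lt hk (mem_shell.1 hα).2.1
    have h2 := (mem_shell.1 hα').2.2
    have := Nat.mul_le_mul_left k huu'
    omega

def sparseHit (k D δ u : ℕ) : Fin (k + 1) → Finset (Fin (k + 1) → ℕ) :=
  Fin.cons (cornerBox k D δ u) (peakBox k D δ u)

def sparsePattern (k D δ u : ℕ) : Pattern (Fin (k + 1) → ℕ) (Fin (k + 1)) :=
  ⟨shell k D δ u \ univ.biUnion (sparseHit k D δ u), sparseHit k D δ u⟩

theorem sparseHit_subset_shell (i : Fin (k + 1)) : sparseHit k D δ u i ⊆ shell k D δ u := by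
  cases i using Fin.cases with
  | zero => exact cornerBox_subset_shell
  | succ j => exact peakBox_subset_shell j

theorem support_sparsePattern : (sparsePattern k D δ u).support = shell k D δ u :=
  Finset.sdiff_union_of_subset (Finset.biUnion_subset.2 fun i _ => sparseHit_subset_shell i)

theorem isSeparated_sparsePattern : (sparsePattern k D δ u).IsSeparated := by
  refine ⟨Finset.sdiff_disjoint, fun i i' hii' => ?_⟩
  cases i using Fin.cases with
  | zero =>
    cases i' using Fin.cases with
    | zero => exact absurd rfl hii'
    | succ j' => exact disjoint_cornerBox_peakBox j'
  | succ j =>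
    cases i' using Fin.cases with
    | zero => exact (disjoint_cornerBox_peakBox j).symm
    | succ j' => exact disjoint_peakBox fun h => hii' (congrArg Fin.succ h)

theorem card_cornerBox (hD : k * (u + δ) ≤ D) : δ ^ k ≤ (cornerBox k D δ u).card := by
  refine (le_of_eq ?_).trans (le_card_tailBox _ fun y hy => ?_)
  · simp
  · refine (Finset.sum_le_card_nsmul _ _ (u + δ) fun i _ => ?_).trans (by simpa using hD)
    exact (Finset.mem_Ico.1 (Fintype.mem_piFinset.1 hy i)).2.le

theorem card_peakBox (hD : k * (u + 3 * δ) ≤ D) (j : Fin k) :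
    δ ^ k ≤ (peakBox k D δ u j).card := by
  refine (le_of_eq ?_).trans (le_card_tailBox _ fun y hy => ?_)
  · rw [Finset.prod_eq_pow_card (b := δ) fun i _ => by split_ifs <;> simp <;> omega, card_univ,
      Fintype.card_fin]
  · refine (Finset.sum_le_card_nsmul _ _ (u + 3 * δ) fun i _ => ?_).trans (by simpa using hD)
    have := Fintype.mem_piFinset.1 hy i
    split_ifs at this <;> simp only [Finset.mem_Ico] at this <;> omega

theorem add_le_of_mem_shell {α : Fin (k + 1) → ℕ} (hα : α ∈ shell k D δ u) (i : Fin k) :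
    u + 3 * δ ≤ α i.succ + 3 * k * δ := by
  obtain ⟨-, hlt, hts⟩ := mem_shell.1 hα
  have hrest : ∑ j ∈ univ.erase i, α j.succ ≤ (k - 1) * (u + 3 * δ) := by
    simpa [Finset.card_erase_of_mem] using
      Finset.sum_le_card_nsmul (univ.erase i) (fun j => α j.succ) _ fun j _ => (hlt j).le
  rw [tailSum, ← Finset.add_sum_erase _ _ (mem_univ i)] at hts
  obtain ⟨m, rfl⟩ : ∃ m, k = m + 1 := ⟨k - 1, by have := i.pos; omega⟩
  simp only [add_tsub_cancel_right] at hrest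
  nlinarith

theorem card_shell_le : (shell k D δ u).card ≤ (3 * k * δ) ^ k := by
  refine (Finset.card_le_card fun α hα => ?_).trans
    ((card_tailBox_le (D := D) fun _ => Ico (u + 3 * δ - 3 * k * δ) (u + 3 * δ)).trans ?_)
  · simp only [tailBox, Finset.mem_filter, Finset.mem_Ico]
    exact ⟨(mem_shell.1 hα).1, fun i => ⟨by have := add_le_of_mem_shell hα i; omega,
      (mem_shell.1 hα).2.1 i⟩⟩
  · refine (Finset.prod_le_pow_card _ _ (3 * k * δ) fun i _ => ?_).trans_eq (by simp)
    rw [Nat.card_Ico]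
    omega

theorem head_lt_head_of_mem_cornerBox {a b : Fin (k + 1) → ℕ} (ha : a ∈ cornerBox k D δ u)
    {j : Fin k} (hb : b ∈ peakBox k D δ u j) : b 0 < a 0 := by
  have hA := mem_cornerBox.1 ha
  have hB := mem_peakBox hb
  have := head_add_tailSum hA.1
  have := head_add_tailSum hB.1
  have := tailSum_lt j.pos fun i => (hA.2 i).2
  have := le_tailSum (α := b) fun i => show u + δ ≤ b i.succ by
    rcases eq_or_ne i j with rfl | hij
    · omega
    · exact (hB.2.2 i hij).1
  omega

theorem cons_apply_lt_diag {a : Fin (k + 1) → ℕ} {b : Fin k → Fin (k + 1) → ℕ}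
    (ha : a ∈ cornerBox k D δ u) (hb : ∀ j, b j ∈ peakBox k D δ u j) (i l : Fin (k + 1))
    (hli : l ≠ i) :
    (Fin.cons a b : Fin (k + 1) → Fin (k + 1) → ℕ) l i
      < (Fin.cons a b : Fin (k + 1) → Fin (k + 1) → ℕ) i i := by
  rcases Fin.eq_zero_or_eq_succ i with rfl | ⟨j, rfl⟩ <;>
    rcases Fin.eq_zero_or_eq_succ l with rfl | ⟨l, rfl⟩
  · exact absurd rfl hli
  · exact head_lt_head_of_mem_cornerBox ha (hb l)
  · have := (mem_peakBox (hb j)).2.1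
    have := ((mem_cornerBox.1 ha).2 j).2
    simp only [Fin.cons_zero, Fin.cons_succ]
    omega
  · have := (mem_peakBox (hb j)).2.1
    have := (mem_peakBox (hb l)).2.2 j fun h => hli (h ▸ rfl)
    simp only [Fin.cons_succ]
    omega

/-- The corner point with the largest tail sum, together with the point of each peak box lowest
in its peak coordinate, is a witness set: a strong divisor of their lcm either has a larger pivot
coordinate than the corner point or lies in the shell, hence in one of the boxes, where it beats
the corresponding extremal point. -/
theorem exists_isWitnessSet_of_occurs_sparsePattern (hD : k * (u + δ) ≤ D)
    (hk : 0 < k) {G : Finset (Fin (k + 1) → ℕ)} (hG : G ⊆ degSet (k + 1) D)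
    (hocc : (sparsePattern k D δ u).Occurs G) : ∃ L, IsWitnessSet (k + 1) G L := by
  obtain ⟨hZ, hhit⟩ := hocc
  obtain ⟨a, ha, hamax⟩ := Finset.exists_max_image (G ∩ cornerBox k D δ u) tailSum (hhit 0)
  choose b hb hbmin using fun j => Finset.exists_min_image (G ∩ peakBox k D δ u j)
    (fun β => β j.succ) (hhit j.succ)
  have hA := mem_cornerBox.1 (Finset.mem_inter.1 ha).2
  have hta := tailSum_lt hk fun j => (hA.2 j).2
  have hA0 := head_add_tailSum hA.1
  refine ⟨_, isWitnessSet_image_of_diag (cons_apply_lt_diag (Finset.mem_inter.1 ha).2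
    fun j => (Finset.mem_inter.1 (hb j)).2) (fun i => ?_) fun g hg hdiv => ?_⟩
  · rcases Fin.eq_zero_or_eq_succ i with rfl | ⟨j, rfl⟩
    · exact (Finset.mem_inter.1 ha).1
    · exact (Finset.mem_inter.1 (hb j)).1
  have hg0 := head_add_tailSum (hG hg)
  have hdiv0 : g 0 ≠ 0 → g 0 < a 0 := hdiv 0
  have hdivj : ∀ j, g j.succ ≠ 0 → g j.succ < b j j.succ := fun j => hdiv j.succ
  obtain hts | hts := lt_or_ge (tailSum g) (k * u)
  · have := le_tailSum fun j => (hA.2 j).1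
    omega
  have hshell : g ∈ shell k D δ u := mem_shell.2 ⟨hG hg, fun j => ?_, hts⟩
  · obtain ⟨i, -, hgi⟩ := Finset.mem_biUnion.1 (by_contra fun h =>
      Finset.disjoint_left.1 hZ hg (Finset.mem_sdiff.2 ⟨hshell, h⟩))
    rcases Fin.eq_zero_or_eq_succ i with rfl | ⟨j, rfl⟩
    · have := hamax g (Finset.mem_inter.2 ⟨hg, hgi⟩)
      omega
    · have : b j j.succ ≤ g j.succ := hbmin j g (Finset.mem_inter.2 ⟨hg, hgi⟩)
      have := (mem_peakBox (show g ∈ peakBox k D δ u j from hgi)).2.1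
      have := hdivj j
      omega
  · have := hdivj j
    have := (mem_peakBox (Finset.mem_inter.1 (hb j)).2).2.1
    omega

variable {p : ℝ}

theorem le_prob_sparsePattern (hp : p ∈ Set.Icc (0 : ℝ) 1) (hD : k * (u + 3 * δ) ≤ D) :
    (1 - p) ^ (3 * k * δ) ^ k * (1 - (1 - p) ^ δ ^ k) ^ (k + 1)
      ≤ (sparsePattern k D δ u).prob p := by
  simpa using Pattern.le_prob hp ((Finset.card_le_card Finset.sdiff_subset).trans card_shell_le)
    fun i => show δ ^ k ≤ (sparseHit k D δ u i).card by
      rcases Fin.eq_zero_or_eq_succ i with rfl | ⟨j, rfl⟩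
      · exact card_cornerBox (le_trans (Nat.mul_le_mul_left k (by omega)) hD)
      · exact card_peakBox hD j

/-- `K` sparse patterns fit side by side in consecutive shells of width `3δ`. -/
theorem one_sub_pow_le_grmPr_of_sparse (hp : p ∈ Set.Icc (0 : ℝ) 1) (hk : 0 < k)
    {K : ℕ} (hD : 3 * k * δ * K ≤ D) :
    1 - (1 - (1 - p) ^ (3 * k * δ) ^ k * (1 - (1 - p) ^ δ ^ k) ^ (k + 1)) ^ K
      ≤ grmPr (k + 1) D p {G | ∃ L, IsWitnessSet (k + 1) G L} := by
  have hfit : ∀ t ∈ range K, k * (3 * δ * t + 3 * δ) ≤ D := fun t ht => by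
    have := Nat.mul_le_mul_left (3 * k * δ) (Finset.mem_range.1 ht)
    nlinarith
  rw [grmPr_eq_bernExp, ← Finset.card_range K]
  refine Pattern.one_sub_pow_le_bernExp hp (P := fun t => sparsePattern k D δ (3 * δ * t))
    (fun _ _ => isSeparated_sparsePattern) (fun t _ t' _ htt' => ?_)
    (fun _ _ => support_sparsePattern.trans_subset (Finset.filter_subset _ _))
    (fun G hG t ht hocc => exists_isWitnessSet_of_occurs_sparsePattern
      ((Nat.mul_le_mul_left k (by omega)).trans (hfit t ht)) hk hG hocc)
    fun t ht => le_prob_sparsePattern hp (hfit t ht)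
  simp only [Function.onFun, support_sparsePattern]
  rcases lt_or_gt_of_ne htt' with h | h
  · exact disjoint_shell hk (by nlinarith)
  · exact (disjoint_shell hk (by nlinarith)).symm

end Sparse

section Dense

variable {n D : ℕ} {p : ℝ}

def denseCenter (D t : ℕ) (i₀ i₁ : Fin n) : Fin n → ℕ :=
  Pi.single i₀ (D - 1 - 2 * t) + Pi.single i₁ (2 * t)

def densePattern (D t : ℕ) (i₀ i₁ : Fin n) : Pattern (Fin n → ℕ) (Fin n) :=
  ⟨∅, fun i => {denseCenter D t i₀ i₁ + Pi.single i 1}⟩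

theorem isSeparated_densePattern {t : ℕ} {i₀ i₁ : Fin n} :
    (densePattern D t i₀ i₁).IsSeparated := by
  refine ⟨Finset.disjoint_empty_left _, fun i j hij => ?_⟩
  simp only [Function.onFun, densePattern, Finset.disjoint_singleton, ne_eq]
  intro h
  simpa [hij] using congrFun h i

theorem sum_denseCenter {t : ℕ} (i₀ i₁ : Fin n) (ht : 2 * t < D) :
    ∑ i, denseCenter D t i₀ i₁ i + 1 = D := by
  simp [denseCenter, Finset.sum_add_distrib]
  omega

theorem add_single_mem_degSet {c : Fin n → ℕ} (hc : ∑ i, c i + 1 = D) (i : Fin n) :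
    c + Pi.single i 1 ∈ degSet n D := by
  simp [mem_degSet, Finset.sum_add_distrib, hc]

theorem mem_support_densePattern {t : ℕ} {i₀ i₁ : Fin n} (hi : i₀ ≠ i₁) {α : Fin n → ℕ}
    (hα : α ∈ (densePattern D t i₀ i₁).support) : α i₁ = 2 * t ∨ α i₁ = 2 * t + 1 := by
  simp only [Pattern.support, densePattern, Finset.empty_union, Finset.mem_biUnion, mem_univ,
    Finset.mem_singleton, true_and] at hα
  obtain ⟨i, rfl⟩ := hα
  by_cases h : i = i₁ <;> simp [denseCenter, hi.symm, h]

theorem one_sub_pow_le_grmPr_of_dense (hp : p ∈ Set.Icc (0 : ℝ) 1) {i₀ i₁ : Fin n}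
    (hi : i₀ ≠ i₁) {K : ℕ} (hD : 2 * K ≤ D) :
    1 - (1 - p ^ n) ^ K ≤ grmPr n D p {G | ∃ L, IsWitnessSet n G L} := by
  rw [grmPr_eq_bernExp, ← Finset.card_range K]
  refine Pattern.one_sub_pow_le_bernExp hp (P := fun t => densePattern D t i₀ i₁)
    (fun _ _ => isSeparated_densePattern) (fun t _ t' _ htt' => ?_) (fun t ht => ?_)
    (fun G hG t ht hocc => exists_isWitnessSet_of_add_single
      (c := denseCenter D t i₀ i₁) ?_ hG fun i => ?_) fun t _ => ?_
  · refine Finset.disjoint_left.2 fun α hα hα' => htt' ?_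
    have := mem_support_densePattern hi hα
    have := mem_support_densePattern hi hα'
    omega
  · have := Finset.mem_range.1 ht
    simp only [Pattern.support, densePattern, Finset.empty_union, Finset.biUnion_subset,
      Finset.singleton_subset_iff]
    exact fun i _ => add_single_mem_degSet (sum_denseCenter (t := t) i₀ i₁ (by omega)) i
  · have := Finset.mem_range.1 ht
    have := sum_denseCenter (t := t) i₀ i₁ (D := D) (by omega)
    omega
  · obtain ⟨x, hx⟩ := hocc.2 i
    simp only [densePattern, Finset.mem_inter, Finset.mem_singleton] at hx
    exact hx.2 ▸ hx.1
  · simpa using Pattern.le_prob (P := densePattern D t i₀ i₁) (A := 0) (B := 1) hp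
      (by simp [densePattern]) fun i => by simp [densePattern]

end Dense

theorem Nat.exists_le_and_not_succ {P : ℕ → Prop} {a b : ℕ} (hab : a ≤ b) (ha : P a)
    (hb : ¬ P b) : ∃ d, a ≤ d ∧ P d ∧ ¬ P (d + 1) := by
  by_contra! h
  exact hb (Nat.le_induction ha (fun d hd hPd => h d hd hPd) b hab)

section Threshold

variable {k : ℕ} {p : ℝ}

theorem exists_sparse_width (hk : 0 < k) (hp : 0 ≤ p) (hsparse : (3 * k : ℝ) ^ k * p ≤ 1 / 2)
    {K D : ℕ} (hK : 1 ≤ K) (hKD : K ≤ D) (hpD : (K : ℝ) ^ k ≤ (D : ℝ) ^ k * p) :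
    ∃ δ : ℕ, 3 * k * δ * K ≤ D ∧ (3 * k * δ : ℝ) ^ k * p ≤ 1 / 2 ∧
      1 / (2 * (6 * k : ℝ) ^ k) ≤ (δ : ℝ) ^ k * p := by
  have hK1 : (1 : ℝ) ≤ (K : ℝ) ^ k := one_le_pow₀ (by exact_mod_cast hK)
  obtain ⟨δ, hδ, hδp, hδp'⟩ := Nat.exists_le_and_not_succ (P := fun δ : ℕ =>
    (3 * k * δ : ℝ) ^ k * p ≤ 1 / 2) (hK.trans hKD) (by simpa using hsparse) fun h => by
      have : (D : ℝ) ^ k ≤ (3 * k * D : ℝ) ^ k := pow_le_pow_left₀ (by positivity) (by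
        nlinarith [(by exact_mod_cast hk : (1 : ℝ) ≤ k), (Nat.cast_nonneg D : (0 : ℝ) ≤ D)]) k
      nlinarith
  refine ⟨δ, ?_, hδp, ?_⟩
  · by_contra! hlt
    have : (D : ℝ) ^ k ≤ (3 * k * δ * K : ℝ) ^ k :=
      pow_le_pow_left₀ (by positivity) (by exact_mod_cast hlt.le) k
    have : (3 * k * δ * K : ℝ) ^ k * p ≤ (K : ℝ) ^ k / 2 := by
      rw [mul_pow, mul_right_comm]; nlinarith [pow_nonneg (Nat.cast_nonneg K : (0 : ℝ) ≤ K) k]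
    nlinarith
  · have hδ1 : (1 : ℝ) ≤ δ := by exact_mod_cast hδ
    have : (3 * k * ((δ + 1 : ℕ) : ℝ)) ^ k ≤ (6 * k : ℝ) ^ k * (δ : ℝ) ^ k := by
      rw [← mul_pow]
      exact pow_le_pow_left₀ (by positivity) (by push_cast; nlinarith) k
    rw [div_le_iff₀ (by positivity)]
    have := not_le.1 hδp'
    nlinarith [pow_pos (by positivity : (0 : ℝ) < 6 * k) k]

theorem le_sparse_factor (hp : p ∈ Set.Icc (0 : ℝ) 1) {δ : ℕ}
    (hδ : (3 * k * δ : ℝ) ^ k * p ≤ 1 / 2) {c : ℝ} (hc : 0 ≤ c) (hcδ : c ≤ (δ : ℝ) ^ k * p) :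
    1 / 2 * (1 - Real.exp (-c)) ^ (k + 1)
      ≤ (1 - p) ^ (3 * k * δ) ^ k * (1 - (1 - p) ^ δ ^ k) ^ (k + 1) := by
  have hq : 0 ≤ 1 - p := sub_nonneg.2 hp.2
  have hshell : 1 / 2 ≤ (1 - p) ^ (3 * k * δ) ^ k := by
    have := one_add_mul_le_pow (by linarith [hp.2] : -2 ≤ -p) ((3 * k * δ) ^ k)
    rw [← sub_eq_add_neg] at this
    push_cast at this
    linarith
  have hbox : (1 - p) ^ δ ^ k ≤ Real.exp (-c) := calc
    (1 - p) ^ δ ^ k ≤ Real.exp (-p) ^ δ ^ k := pow_le_pow_left₀ hq (Real.one_sub_le_exp_neg p) _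
    _ = Real.exp (-((δ : ℝ) ^ k * p)) := by rw [← Real.exp_nat_mul]; push_cast; ring_nf
    _ ≤ Real.exp (-c) := Real.exp_le_exp.2 (neg_le_neg hcδ)
  have hc1 : 0 ≤ 1 - Real.exp (-c) := sub_nonneg.2 (Real.exp_le_one_iff.2 (neg_nonpos.2 hc))
  exact mul_le_mul hshell (pow_le_pow_left₀ hc1 (by linarith) _) (pow_nonneg hc1 _)
    (pow_nonneg hq _)

end Threshold

theorem exists_one_sub_pow_le_grmPr {k : ℕ} (hk : 0 < k) :
    ∃ β : ℝ, 0 < β ∧ β ≤ 1 ∧ ∀ p ∈ Set.Icc (0 : ℝ) 1, ∀ K D : ℕ, 1 ≤ K → 2 * K ≤ D →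
      (K : ℝ) ^ k ≤ (D : ℝ) ^ k * p →
        1 - (1 - β) ^ K ≤ grmPr (k + 1) D p {G | ∃ L, IsWitnessSet (k + 1) G L} := by
  set c : ℝ := 1 / (2 * (6 * k : ℝ) ^ k)
  set βsparse : ℝ := 1 / 2 * (1 - Real.exp (-c)) ^ (k + 1)
  set βdense : ℝ := (1 / (2 * (3 * k : ℝ) ^ k)) ^ (k + 1)
  have hc : 0 < c := by positivity
  have hexp : 0 < 1 - Real.exp (-c) := sub_pos.2 (Real.exp_lt_one_iff.2 (neg_lt_zero.2 hc))
  have hdense1 : 1 / (2 * (3 * k : ℝ) ^ k) ≤ 1 := by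
    rw [div_le_one (by positivity)]
    nlinarith [one_le_pow₀ (by norm_cast; omega : (1 : ℝ) ≤ 3 * k) (n := k)]
  refine ⟨min βsparse βdense, lt_min (by positivity) (by positivity),
    (min_le_right _ _).trans (pow_le_one₀ (by positivity) hdense1),
    fun p hp K D hK hKD hpD => ?_⟩
  have hmono : ∀ x, min βsparse βdense ≤ x → x ≤ 1 →
      1 - (1 - min βsparse βdense) ^ K ≤ 1 - (1 - x) ^ K := fun x h0 h1 =>
    sub_le_sub_left (pow_le_pow_left₀ (by linarith) (by linarith) K) 1
  have hq : 0 ≤ 1 - p := sub_nonneg.2 hp.2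
  by_cases hsparse : (3 * k : ℝ) ^ k * p ≤ 1 / 2
  · obtain ⟨δ, hD, hδp, hcδ⟩ := exists_sparse_width hk hp.1 hsparse hK (by omega) hpD
    have hfac1 : 0 ≤ 1 - (1 - p) ^ δ ^ k := sub_nonneg.2 (pow_le_one₀ hq (by linarith [hp.1]))
    refine (hmono _ ((min_le_left _ _).trans (le_sparse_factor hp hδp hc.le hcδ))
      (mul_le_one₀ (pow_le_one₀ hq (by linarith [hp.1])) (pow_nonneg hfac1 _)
        (pow_le_one₀ hfac1 (by linarith [pow_nonneg hq (δ ^ k)])))).trans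
      (one_sub_pow_le_grmPr_of_sparse hp hk hD)
  · have hp0 : 1 / (2 * (3 * k : ℝ) ^ k) ≤ p := by
      rw [div_le_iff₀ (by positivity)]
      linarith [not_le.1 hsparse]
    refine (hmono _ ((min_le_right _ _).trans (pow_le_pow_left₀ (by positivity) hp0 _))
      (pow_le_one₀ hp.1 hp.2)).trans
      (one_sub_pow_le_grmPr_of_dense hp (i₀ := 0) (i₁ := Fin.last k) ?_ hKD)
    exact fun h => by simp [Fin.ext_iff] at h; omega

theorem aas_witness_set_above_threshold
    (n : ℕ) (hn : 2 ≤ n) (p : ℕ → ℝ) (hp : ∀ D, p D ∈ Set.Icc (0:ℝ) 1)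
    (hpinf : Tendsto (fun D : ℕ => (D : ℝ) ^ (n - 1) * p D) atTop atTop) :
    Tendsto (fun D : ℕ => grmPr n D (p D) {G | ∃ L, IsWitnessSet n G L})
      atTop (nhds 1) := by
  obtain ⟨k, rfl⟩ : ∃ k, n = k + 1 := ⟨n - 1, by omega⟩
  simp only [add_tsub_cancel_right] at hpinf
  obtain ⟨β, hβ0, hβ1, hβ⟩ := exists_one_sub_pow_le_grmPr (by omega : 0 < k)
  refine tendsto_order.2 ⟨fun a ha => ?_, fun a ha =>
    Eventually.of_forall fun D => (grmPr_le_one (hp D) _).trans_lt ha⟩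
  obtain ⟨K, hK⟩ := exists_pow_lt_of_lt_one (sub_pos.2 ha) (sub_lt_self 1 hβ0)
  filter_upwards [hpinf.eventually_ge_atTop (((K + 1 : ℕ) : ℝ) ^ k),
    eventually_ge_atTop (2 * (K + 1))] with D hpD hD
  have hbound := hβ (p D) (hp D) (K + 1) D le_add_self hD hpD
  have := pow_le_pow_of_le_one (sub_nonneg.2 hβ1) (sub_le_self 1 hβ0.le) (Nat.le_add_right K 1)
  linarith
end

section
/- Let n ≥ 2 and let p : ℕ → [0,1] satisfy D^{n−3/2}·p(D) → 0 as D → ∞. Then for the random set G of the graded model M(n,D,p), the probability that G is strongly generic tends to 1 as D → ∞. -/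
open Finset Filter

/-- A set of exponent vectors is strongly generic if no variable appears with the same
nonzero exponent in two distinct elements. -/
def StronglyGeneric {n : ℕ} (G : Finset (Fin n → ℕ)) : Prop :=
  ∀ α ∈ G, ∀ β ∈ G, α ≠ β → ∀ i, α i = β i → α i = 0

/-!
A set `G ⊆ Ω_D` fails to be strongly generic only if it contains two distinct vectors `α ≠ β`
with `α i = β i` for some coordinate `i`. A vector of `Ω_D` is determined by all but one of its
coordinates, so `#Ω_D ≤ (D+1)^(n-1)` and, for fixed `i` and `α`, there are at most
`(D+1)^(n-2)` such `β`. Hence there are at most `n (D+1)^(2n-3)` such triples `(i, α, β)`,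
each pair `{α, β}` lies in `G` with probability `p²`, and the union bound gives
`P(G not strongly generic) ≤ n (D+1)^(2n-3) p² ≤ n 2^(2n-3) (D^(n-3/2) p)² → 0`.
-/

def bernoulliWeight {X : Type*} (Ω : Finset X) (p : ℝ) (G : Finset X) : ℝ :=
  p ^ #G * (1 - p) ^ (#Ω - #G)

noncomputable def bernoulliProb {X : Type*} (Ω : Finset X) (p : ℝ) (E : Set (Finset X)) : ℝ :=
  ∑ G ∈ Ω.powerset, E.indicator 1 G * bernoulliWeight Ω p G

section Bernoulli

variable {X : Type*} (Ω : Finset X)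

theorem bernoulliWeight_nonneg {p : ℝ} (hp₀ : 0 ≤ p) (hp₁ : p ≤ 1) (G : Finset X) :
    0 ≤ bernoulliWeight Ω p G :=
  mul_nonneg (pow_nonneg hp₀ _) (pow_nonneg (sub_nonneg.2 hp₁) _)

theorem sum_bernoulliWeight (p : ℝ) : ∑ G ∈ Ω.powerset, bernoulliWeight Ω p G = 1 := by
  simp [bernoulliWeight, sum_pow_mul_eq_add_pow]

theorem bernoulliProb_nonneg {p : ℝ} (hp₀ : 0 ≤ p) (hp₁ : p ≤ 1) (E : Set (Finset X)) :
    0 ≤ bernoulliProb Ω p E :=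
  sum_nonneg fun G _ => mul_nonneg (Set.indicator_nonneg (fun _ _ => zero_le_one) G)
    (bernoulliWeight_nonneg Ω hp₀ hp₁ G)

theorem bernoulliProb_compl (p : ℝ) (E : Set (Finset X)) :
    bernoulliProb Ω p Eᶜ = 1 - bernoulliProb Ω p E := by
  rw [eq_sub_iff_add_eq, bernoulliProb, bernoulliProb, ← sum_add_distrib,
    ← sum_bernoulliWeight Ω p]
  refine sum_congr rfl fun G _ => ?_
  rw [← add_mul, ← Pi.add_apply, Set.indicator_compl_add_self, Pi.one_apply, one_mul]

variable [DecidableEq X]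

theorem bernoulliProb_superset {S : Finset X} (hS : S ⊆ Ω) (p : ℝ) :
    bernoulliProb Ω p {G | S ⊆ G} = p ^ #S := by
  have hfilter : {G ∈ Ω.powerset | S ⊆ G} = (Ω \ S).powerset.image (S ∪ ·) := by
    rw [← Icc_eq_image_powerset hS]
    ext G
    simp [and_comm]
  have hdisj : ∀ H ∈ (Ω \ S).powerset, Disjoint S H := fun H hH =>
    disjoint_of_subset_right (mem_powerset.1 hH) disjoint_sdiff
  have hinj : Set.InjOn (S ∪ ·) ↑(Ω \ S).powerset := fun H hH H' hH' h => by
    rw [← union_sdiff_cancel_left (hdisj H hH), ← union_sdiff_cancel_left (hdisj H' hH')]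
    exact congrArg (· \ S) h
  have hweight : ∀ H ∈ (Ω \ S).powerset,
      bernoulliWeight Ω p (S ∪ H) = p ^ #S * bernoulliWeight (Ω \ S) p H := fun H hH => by
    rw [bernoulliWeight, bernoulliWeight, card_union_of_disjoint (hdisj H hH),
      card_sdiff_of_subset hS, pow_add, Nat.sub_add_eq]
    ring
  calc bernoulliProb Ω p {G | S ⊆ G}
      = ∑ G ∈ Ω.powerset with S ⊆ G, bernoulliWeight Ω p G := by
        simp [bernoulliProb, Set.indicator_apply, sum_filter]
    _ = ∑ H ∈ (Ω \ S).powerset, p ^ #S * bernoulliWeight (Ω \ S) p H := by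
        rw [hfilter, sum_image hinj]
        exact sum_congr rfl hweight
    _ = p ^ #S := by rw [← mul_sum, sum_bernoulliWeight, mul_one]

theorem bernoulliProb_le_sum_pow {τ : Type*} {p : ℝ} (hp₀ : 0 ≤ p) (hp₁ : p ≤ 1)
    {E : Set (Finset X)} (T : Finset τ) (S : τ → Finset X) (hS : ∀ t ∈ T, S t ⊆ Ω)
    (hE : ∀ G ⊆ Ω, G ∈ E → ∃ t ∈ T, S t ⊆ G) :
    bernoulliProb Ω p E ≤ ∑ t ∈ T, p ^ #(S t) := by
  have hcover : ∀ G ∈ Ω.powerset,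
      E.indicator 1 G ≤ ∑ t ∈ T, {G | S t ⊆ G}.indicator (1 : Finset X → ℝ) G := by
    intro G hG
    by_cases hGE : G ∈ E
    · obtain ⟨t, ht, hSt⟩ := hE G (mem_powerset.1 hG) hGE
      calc E.indicator 1 G = {G | S t ⊆ G}.indicator (1 : Finset X → ℝ) G := by
            rw [Set.indicator_of_mem hGE, Set.indicator_of_mem hSt]
        _ ≤ _ := single_le_sum (f := fun t => {G | S t ⊆ G}.indicator (1 : Finset X → ℝ) G)
            (fun t _ => Set.indicator_nonneg (fun _ _ => zero_le_one) G) ht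
    · rw [Set.indicator_of_notMem hGE]
      exact sum_nonneg fun t _ => Set.indicator_nonneg (fun _ _ => zero_le_one) G
  calc bernoulliProb Ω p E
      ≤ ∑ G ∈ Ω.powerset,
          (∑ t ∈ T, {G | S t ⊆ G}.indicator 1 G) * bernoulliWeight Ω p G :=
        sum_le_sum fun G hG =>
          mul_le_mul_of_nonneg_right (hcover G hG) (bernoulliWeight_nonneg Ω hp₀ hp₁ G)
    _ = ∑ t ∈ T, bernoulliProb Ω p {G | S t ⊆ G} := by
        simp_rw [sum_mul]
        exact sum_comm
    _ = ∑ t ∈ T, p ^ #(S t) := sum_congr rfl fun t ht => bernoulliProb_superset Ω (hS t ht) p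

end Bernoulli

theorem grmPr_eq_bernoulliProb (n D : ℕ) (p : ℝ) (E : Set (Finset (Fin n → ℕ))) :
    grmPr n D p E = bernoulliProb (degSet n D) p E :=
  rfl

theorem card_le_pow_of_eqOn_compl {ι : Type*} [Fintype ι] [DecidableEq ι]
    (Φ : Finset (ι → ℕ)) (s : Finset ι) (D : ℕ) (hle : ∀ β ∈ Φ, ∀ k, β k ≤ D)
    (hinj : ∀ β ∈ Φ, ∀ β' ∈ Φ, (∀ k ∉ s, β k = β' k) → β = β') :
    #Φ ≤ (D + 1) ^ (Fintype.card ι - #s) := by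
  have hmaps : Set.MapsTo (fun (β : ι → ℕ) (k : {k // k ∉ s}) => β k) ↑Φ
      (Fintype.piFinset fun _ : {k // k ∉ s} => range (D + 1) : Finset _) := fun β hβ => by
    simpa [Nat.lt_succ_iff] using fun k : {k // k ∉ s} => hle β hβ k
  refine (card_le_card_of_injOn _ hmaps fun β hβ β' hβ' h => hinj β hβ β' hβ' fun k hk =>
    congrFun h ⟨k, hk⟩).trans_eq ?_
  simp [Fintype.card_subtype_compl]

theorem le_of_mem_degSet {n D : ℕ} {β : Fin n → ℕ} (hβ : β ∈ degSet n D) (k : Fin n) :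
    β k ≤ D := by
  rw [degSet, Nat.mem_antidiagonalTuple] at hβ
  exact hβ ▸ single_le_sum (fun _ _ => Nat.zero_le _) (mem_univ k)

theorem eq_of_mem_degSet_of_forall_ne {n D : ℕ} {β β' : Fin n → ℕ} (hβ : β ∈ degSet n D)
    (hβ' : β' ∈ degSet n D) (j : Fin n) (h : ∀ k ≠ j, β k = β' k) : β = β' := by
  rw [degSet, Nat.mem_antidiagonalTuple] at hβ hβ'
  have hrest : ∑ k ∈ univ.erase j, β k = ∑ k ∈ univ.erase j, β' k :=
    sum_congr rfl fun k hk => h k (ne_of_mem_erase hk)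
  have hj : β j = β' j := by
    rw [← add_sum_erase _ _ (mem_univ j)] at hβ hβ'
    omega
  funext k
  by_cases hk : k = j
  · exact hk ▸ hj
  · exact h k hk

theorem card_degSet_le (n D : ℕ) : #(degSet n D) ≤ (D + 1) ^ (n - 1) := by
  rcases n with _ | n
  · exact (card_le_one_of_subsingleton _).trans_eq (by simp)
  · refine (card_le_pow_of_eqOn_compl _ {0} D (fun β hβ => le_of_mem_degSet hβ)
      fun β hβ β' hβ' h => eq_of_mem_degSet_of_forall_ne hβ hβ' 0 fun k hk =>
        h k (by simpa)).trans_eq ?_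
    simp

theorem card_degSet_filter_apply_eq_le {n : ℕ} (hn : 2 ≤ n) (D : ℕ) (i : Fin n) (a : ℕ) :
    #{β ∈ degSet n D | β i = a} ≤ (D + 1) ^ (n - 2) := by
  have : Nontrivial (Fin n) := Fin.nontrivial_iff_two_le.2 hn
  obtain ⟨j, hji⟩ := exists_ne i
  have h := card_le_pow_of_eqOn_compl {β ∈ degSet n D | β i = a} {i, j} D
    (fun β hβ => le_of_mem_degSet (mem_filter.1 hβ).1) fun β hβ β' hβ' h => by
      rw [mem_filter] at hβ hβ'
      refine eq_of_mem_degSet_of_forall_ne hβ.1 hβ'.1 j fun k hkj => ?_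
      by_cases hki : k = i
      · rw [hki, hβ.2, hβ'.2]
      · exact h k (by simp [hki, hkj])
  simpa [card_pair hji.symm] using h

-- The shared exponent may be `0`; counting those triples too only weakens the bound.
def coincidences (n D : ℕ) : Finset ((_ : Fin n × (Fin n → ℕ)) × (Fin n → ℕ)) :=
  (univ ×ˢ degSet n D).sigma fun x => {β ∈ degSet n D | β x.1 = x.2 x.1}.erase x.2

theorem mem_coincidences {n D : ℕ} {i : Fin n} {α β : Fin n → ℕ} :
    ⟨(i, α), β⟩ ∈ coincidences n D ↔
      α ∈ degSet n D ∧ β ∈ degSet n D ∧ β ≠ α ∧ β i = α i := by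
  simp [coincidences, and_left_comm]

theorem card_coincidences_le {n : ℕ} (hn : 2 ≤ n) (D : ℕ) :
    #(coincidences n D) ≤ n * (D + 1) ^ (2 * n - 3) := by
  calc #(coincidences n D)
      ≤ ∑ _x ∈ univ ×ˢ degSet n D, (D + 1) ^ (n - 2) := by
        rw [coincidences, card_sigma]
        exact sum_le_sum fun x _ =>
          (card_erase_le).trans (card_degSet_filter_apply_eq_le hn D x.1 (x.2 x.1))
    _ = n * #(degSet n D) * (D + 1) ^ (n - 2) := by simp
    _ ≤ n * (D + 1) ^ (n - 1) * (D + 1) ^ (n - 2) := by gcongr; exact card_degSet_le n D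
    _ = n * (D + 1) ^ (2 * n - 3) := by rw [mul_assoc, ← pow_add]; congr 2; omega

theorem grmPr_not_stronglyGeneric_le {n : ℕ} (hn : 2 ≤ n) (D : ℕ) {p : ℝ} (hp₀ : 0 ≤ p)
    (hp₁ : p ≤ 1) :
    grmPr n D p {G | StronglyGeneric G}ᶜ ≤ n * ((D : ℝ) + 1) ^ (2 * n - 3) * p ^ 2 := by
  have hcover : ∀ G ⊆ degSet n D, G ∈ {G | StronglyGeneric G}ᶜ →
      ∃ t ∈ coincidences n D, {t.1.2, t.2} ⊆ G := fun G hG hbad => by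
    simp only [Set.mem_compl_iff, Set.mem_ofPred_eq, StronglyGeneric] at hbad
    push Not at hbad
    obtain ⟨α, hα, β, hβ, hαβ, i, hi, -⟩ := hbad
    exact ⟨⟨(i, α), β⟩, mem_coincidences.2 ⟨hG hα, hG hβ, hαβ.symm, hi.symm⟩,
      insert_subset hα (singleton_subset_iff.2 hβ)⟩
  calc grmPr n D p {G | StronglyGeneric G}ᶜ
      ≤ ∑ t ∈ coincidences n D, p ^ #{t.1.2, t.2} := by
        rw [grmPr_eq_bernoulliProb]
        refine bernoulliProb_le_sum_pow _ hp₀ hp₁ _ _ (fun t ht => ?_) hcover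
        obtain ⟨hα, hβ, -⟩ := mem_coincidences.1 ht
        exact insert_subset hα (singleton_subset_iff.2 hβ)
    _ = #(coincidences n D) * p ^ 2 := by
        rw [← nsmul_eq_mul, ← sum_const]
        refine sum_congr rfl fun t ht => ?_
        rw [card_pair (mem_coincidences.1 ht).2.2.1.symm]
    _ ≤ n * ((D : ℝ) + 1) ^ (2 * n - 3) * p ^ 2 := by
        gcongr
        exact_mod_cast card_coincidences_le hn D

theorem add_one_pow_le_two_pow_mul_rpow_sq {x : ℝ} (hx : 1 ≤ x) {n : ℕ} (hn : 2 ≤ n) :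
    (x + 1) ^ (2 * n - 3) ≤ 2 ^ (2 * n - 3) * (x ^ ((n : ℝ) - 3 / 2)) ^ 2 := by
  have hexp : ((n : ℝ) - 3 / 2) * 2 = ((2 * n - 3 : ℕ) : ℝ) := by
    rw [Nat.cast_sub (by omega)]
    push_cast
    ring
  rw [← Real.rpow_mul_natCast (by linarith), Nat.cast_ofNat, hexp, Real.rpow_natCast, ← mul_pow]
  exact pow_le_pow_left₀ (by linarith) (by linarith) _

theorem aas_strongly_generic_below_threshold
    (n : ℕ) (hn : 2 ≤ n) (p : ℕ → ℝ) (hp : ∀ D, p D ∈ Set.Icc (0:ℝ) 1)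
    (hp0 : Tendsto (fun D : ℕ => (D : ℝ) ^ ((n : ℝ) - 3 / 2) * p D) atTop (nhds 0)) :
    Tendsto (fun D : ℕ => grmPr n D (p D) {G | StronglyGeneric G}) atTop (nhds 1) := by
  have hlim : Tendsto
      (fun D : ℕ => n * 2 ^ (2 * n - 3) * ((D : ℝ) ^ ((n : ℝ) - 3 / 2) * p D) ^ 2)
      atTop (nhds 0) := by
    simpa using (hp0.pow 2).const_mul ((n : ℝ) * 2 ^ (2 * n - 3))
  have hbad :
      Tendsto (fun D : ℕ => grmPr n D (p D) {G | StronglyGeneric G}ᶜ) atTop (nhds 0) := by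
    refine squeeze_zero' (.of_forall fun D => bernoulliProb_nonneg _ (hp D).1 (hp D).2 _) ?_ hlim
    filter_upwards [eventually_ge_atTop 1] with D hD
    calc grmPr n D (p D) {G | StronglyGeneric G}ᶜ
        ≤ n * ((D : ℝ) + 1) ^ (2 * n - 3) * p D ^ 2 :=
          grmPr_not_stronglyGeneric_le hn D (hp D).1 (hp D).2
      _ ≤ n * (2 ^ (2 * n - 3) * ((D : ℝ) ^ ((n : ℝ) - 3 / 2)) ^ 2) * p D ^ 2 := by
          gcongr
          exact add_one_pow_le_two_pow_mul_rpow_sq (by exact_mod_cast hD) hn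
      _ = _ := by ring
  simpa [grmPr_eq_bernoulliProb, bernoulliProb_compl] using hbad.const_sub 1
end

section
/- Let n ≥ 2, D ≥ 1, p ∈ [0,1], q = 1 − p, let a ≥ 1 be an integer, and let α ∈ ℕ^n satisfy α_1+⋯+α_n = D + a and α_i ≥ a for all i. Then for the random set G of the graded model M(n,D,p), the probability of the witness event w_α equals (1 − q^{m_{n−1}(a−n+1)})^n · q^{m_n(a−n)}. -/
/-!
The event `w_α` says that `G` meets each face `S_i = {β ∈ Ω_D | β_i = α_i, β_j < α_j (j ≠ i)}`
and misses `T = {β ∈ Ω_D | β < α}`. These `n + 1` subsets of `Ω_D` are pairwise disjoint, so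
under the product measure the `n + 1` requirements are independent, with probabilities
`1 - q ^ |S_i|` and `q ^ |T|`. The reflection `β ↦ α - 1 - β` identifies `T` with the exponent
vectors of degree `a - n`, so `|T| = m_n(a - n)`; dropping the fixed coordinate `i` identifies
`S_i` in the same way with the vectors of degree `a - n + 1` in `n - 1` variables.
-/

open Finset Filter

/-- `m_n(d) = C(d+n-1, n-1)` for `d ≥ 0`, and `0` for `d < 0`. -/
def mfun (n : ℕ) (d : ℤ) : ℕ := if 0 ≤ d then (d.toNat + n - 1).choose (n - 1) else 0

/-- The witness event `w_α`: for every `i` the random set `G` contains some `β` with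
`β i = α i` and `β j < α j` for all `j ≠ i`, and `G` contains no `β` with `β j < α j`
for all `j`. -/
def wEvent {n : ℕ} (α : Fin n → ℕ) (G : Finset (Fin n → ℕ)) : Prop :=
  (∀ i, ∃ β ∈ G, β i = α i ∧ ∀ j, j ≠ i → β j < α j) ∧
    ¬ ∃ β ∈ G, ∀ j, β j < α j

section BernoulliExpectation
variable {X : Type*}

noncomputable def bernoulliExpectation (p : ℝ) (Ω : Finset X) (f : Finset X → ℝ) : ℝ :=
  ∑ G ∈ Ω.powerset, f G * (p ^ #G * (1 - p) ^ (#Ω - #G))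

variable (p : ℝ)

lemma bernoulliExpectation_one (Ω : Finset X) : bernoulliExpectation p Ω (fun _ => 1) = 1 := by
  simp [bernoulliExpectation, sum_pow_mul_eq_add_pow]

lemma bernoulliExpectation_sub (Ω : Finset X) (f g : Finset X → ℝ) :
    bernoulliExpectation p Ω (fun G => f G - g G) =
      bernoulliExpectation p Ω f - bernoulliExpectation p Ω g := by
  simp only [bernoulliExpectation, sub_mul, sum_sub_distrib]

variable [DecidableEq X]

lemma bernoulliExpectation_eq_empty (A : Finset X) :
    bernoulliExpectation p A (fun H => if H = ∅ then 1 else 0) = (1 - p) ^ #A := by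
  rw [bernoulliExpectation, sum_eq_single_of_mem ∅ (empty_mem_powerset A)]
  · simp
  · intro H _ hH
    simp [hH]

lemma bernoulliExpectation_nonempty (A : Finset X) :
    bernoulliExpectation p A (fun H => if H.Nonempty then 1 else 0) = 1 - (1 - p) ^ #A := by
  have hcompl : (fun H : Finset X => if H.Nonempty then (1 : ℝ) else 0) =
      fun H => 1 - if H = ∅ then 1 else 0 := by
    funext H
    rcases H.eq_empty_or_nonempty with rfl | hH
    · simp
    · simp [hH, hH.ne_empty]
  rw [hcompl, bernoulliExpectation_sub, bernoulliExpectation_one, bernoulliExpectation_eq_empty]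

lemma bernoulliExpectation_union_mul {A B : Finset X} (hAB : Disjoint A B)
    (f g : Finset X → ℝ) :
    bernoulliExpectation p (A ∪ B) (fun G => f (G ∩ A) * g (G ∩ B)) =
      bernoulliExpectation p A f * bernoulliExpectation p B g := by
  rw [bernoulliExpectation, bernoulliExpectation, bernoulliExpectation, sum_mul_sum,
    ← sum_product']
  refine sum_nbij' (fun G => (G ∩ A, G ∩ B)) (fun P => P.1 ∪ P.2) ?_ ?_ ?_ ?_ ?_
  · intro G _
    simp
  · rintro ⟨H, K⟩ hHK
    simp only [mem_product, mem_powerset] at hHK ⊢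
    exact union_subset_union hHK.1 hHK.2
  · intro G hG
    simp only [mem_powerset] at hG
    rw [← inter_union_distrib_left, inter_eq_left.2 hG]
  · rintro ⟨H, K⟩ hHK
    simp only [mem_product, mem_powerset] at hHK
    simp only [union_inter_distrib_right, inter_eq_left.2 hHK.1, inter_eq_left.2 hHK.2,
      disjoint_iff_inter_eq_empty.1 (hAB.mono_left hHK.1),
      disjoint_iff_inter_eq_empty.1 (hAB.symm.mono_left hHK.2), union_empty, empty_union]
  · intro G hG
    simp only [mem_powerset] at hG
    have hsplit : G = G ∩ A ∪ G ∩ B := by rw [← inter_union_distrib_left, inter_eq_left.2 hG]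
    have hdisj : Disjoint (G ∩ A) (G ∩ B) := (hAB.mono inter_subset_right inter_subset_right)
    have hcard : #G = #(G ∩ A) + #(G ∩ B) := by
      conv_lhs => rw [hsplit]
      exact card_union_of_disjoint hdisj
    have hA : #(G ∩ A) ≤ #A := card_le_card inter_subset_right
    have hB : #(G ∩ B) ≤ #B := card_le_card inter_subset_right
    rw [card_union_of_disjoint hAB, hcard,
      show #A + #B - (#(G ∩ A) + #(G ∩ B)) = (#A - #(G ∩ A)) + (#B - #(G ∩ B)) by omega,
      pow_add, pow_add]
    ring

lemma bernoulliExpectation_prod {ι : Type*} [DecidableEq ι] (s : Finset ι) (S : ι → Finset X)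
    (f : ι → Finset X → ℝ) {Ω : Finset X} (hS : ∀ i ∈ s, S i ⊆ Ω)
    (hdisj : (s : Set ι).PairwiseDisjoint S) :
    bernoulliExpectation p Ω (fun G => ∏ i ∈ s, f i (G ∩ S i)) =
      ∏ i ∈ s, bernoulliExpectation p (S i) (f i) := by
  induction s using Finset.induction_on generalizing Ω with
  | empty => simpa using bernoulliExpectation_one p Ω
  | insert i s hi ih =>
    rw [coe_insert, Set.pairwiseDisjoint_insert] at hdisj
    have hSΩ : S i ⊆ Ω := hS i (mem_insert_self i s)
    have hrest : ∀ j ∈ s, S j ⊆ Ω \ S i := fun j hj =>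
      subset_sdiff.2 ⟨hS j (mem_insert_of_mem hj),
        (hdisj.2 j hj (ne_of_mem_of_not_mem hj hi).symm).symm⟩
    have hfactor : ∀ G : Finset X, ∏ j ∈ insert i s, f j (G ∩ S j) =
        f i (G ∩ S i) * ∏ j ∈ s, f j (G ∩ (Ω \ S i) ∩ S j) := fun G => by
      rw [prod_insert hi]
      congr 1
      exact prod_congr rfl fun j hj => by rw [inter_assoc, inter_eq_right.2 (hrest j hj)]
    have hsplit := bernoulliExpectation_union_mul p (disjoint_sdiff : Disjoint (S i) (Ω \ S i))
      (f i) (fun K => ∏ j ∈ s, f j (K ∩ S j))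
    rw [union_sdiff_of_subset hSΩ] at hsplit
    simp_rw [hfactor, hsplit, ih hrest hdisj.1, prod_insert hi]

end BernoulliExpectation

lemma card_antidiagonalTuple (k d : ℕ) :
    #(Nat.antidiagonalTuple k d) = (k + d - 1).choose d := by
  rw [← piAntidiag_univ_fin_eq_antidiagonalTuple, ← map_sym_eq_piAntidiag, card_map,
    show (univ : Finset (Fin k)).sym d = univ by ext; simp]
  simpa using Sym.card_sym_eq_choose (α := Fin k) d

lemma mfun_natCast_eq_card_antidiagonalTuple {k : ℕ} (hk : 1 ≤ k) (e : ℕ) :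
    mfun k e = #(Nat.antidiagonalTuple k e) := by
  rw [mfun, if_pos (Int.natCast_nonneg e), Int.toNat_natCast, card_antidiagonalTuple,
    show e + k - 1 = k - 1 + e by omega, show k + e - 1 = k - 1 + e by omega, Nat.choose_symm_add]

lemma sum_sub_one_sub_add {k : ℕ} {γ β : Fin k → ℕ} (h : ∀ j, β j < γ j) :
    ∑ j, (γ j - 1 - β j) + ∑ j, β j + k = ∑ j, γ j := by
  have hpt : ∀ j, γ j = γ j - 1 - β j + β j + 1 := fun j => by have := h j; omega
  rw [sum_congr rfl fun j _ => hpt j]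
  simp [sum_add_distrib]

lemma card_filter_lt_antidiagonalTuple {k : ℕ} (hk : 1 ≤ k) (d : ℕ) (γ : Fin k → ℕ)
    (hγ : ∀ j, ((∑ i, γ i : ℕ) : ℤ) - k - d < γ j) :
    #{β ∈ Nat.antidiagonalTuple k d | ∀ j, β j < γ j} =
      mfun k (((∑ i, γ i : ℕ) : ℤ) - k - d) := by
  rcases lt_or_ge (((∑ i, γ i : ℕ) : ℤ) - k - d) 0 with hneg | hnonneg
  · rw [mfun, if_neg hneg.not_ge, card_eq_zero, filter_eq_empty_iff]
    intro β hβ hlt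
    have := sum_sub_one_sub_add hlt
    rw [Nat.mem_antidiagonalTuple] at hβ
    omega
  · obtain ⟨e, he⟩ := Int.eq_ofNat_of_zero_le hnonneg
    -- `hγ` puts the whole simplex of degree `e` inside the box `δ < γ`, so the reflection
    -- `β ↦ γ - 1 - β` is a bijection onto it.
    have hδlt : ∀ δ ∈ Nat.antidiagonalTuple k e, ∀ j, δ j < γ j := fun δ hδ j => by
      have := single_le_sum (fun i _ => Nat.zero_le (δ i)) (mem_univ j)
      have := hγ j
      rw [Nat.mem_antidiagonalTuple] at hδ
      omega
    rw [he, mfun_natCast_eq_card_antidiagonalTuple hk]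
    refine card_nbij' (fun β j => γ j - 1 - β j) (fun δ j => γ j - 1 - δ j) ?_ ?_ ?_ ?_
    · intro β hβ
      simp only [mem_coe, mem_filter, Nat.mem_antidiagonalTuple] at hβ ⊢
      have := sum_sub_one_sub_add hβ.2
      omega
    · intro δ hδ
      have hlt := hδlt δ hδ
      simp only [mem_coe, mem_filter, Nat.mem_antidiagonalTuple] at hδ ⊢
      have := sum_sub_one_sub_add hlt
      exact ⟨by omega, fun j => by have := hlt j; omega⟩
    · intro β hβ
      simp only [mem_coe, mem_filter] at hβ
      funext j
      show γ j - 1 - (γ j - 1 - β j) = β j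
      have := hβ.2 j
      omega
    · intro δ hδ
      have := hδlt δ hδ
      funext j
      show γ j - 1 - (γ j - 1 - δ j) = δ j
      have := this j
      omega

lemma card_filter_removeNth_antidiagonalTuple {k d x : ℕ} (i : Fin (k + 1)) (hx : x ≤ d)
    (P : (Fin k → ℕ) → Prop) [DecidablePred P] :
    #{β ∈ Nat.antidiagonalTuple (k + 1) d | β i = x ∧ P (i.removeNth β)} =
      #{γ ∈ Nat.antidiagonalTuple k (d - x) | P γ} := by
  refine card_nbij' i.removeNth (fun γ => i.insertNth x γ) ?_ ?_ ?_ ?_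
  · intro β hβ
    simp only [mem_coe, mem_filter, Nat.mem_antidiagonalTuple] at hβ ⊢
    rw [Fin.sum_univ_succAbove _ i, hβ.2.1] at hβ
    exact ⟨by simp only [Fin.removeNth_apply]; omega, hβ.2.2⟩
  · intro γ hγ
    simp only [mem_coe, mem_filter, Nat.mem_antidiagonalTuple] at hγ ⊢
    simp only [Fin.sum_univ_succAbove _ i, Fin.insertNth_apply_same,
      Fin.insertNth_apply_succAbove, hγ.1, Fin.removeNth_insertNth, hγ.2, and_self, and_true]
    omega
  · intro β hβ
    simp only [mem_coe, mem_filter] at hβ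
    rw [← hβ.2.1]
    exact Fin.insertNth_self_removeNth i β
  · intro γ _
    exact Fin.removeNth_insertNth (α := fun _ => ℕ) i x γ

/-- `witnessPart D α none` is the set `T` and `witnessPart D α (some i)` the face `S_i`. -/
def witnessPart {n : ℕ} (D : ℕ) (α : Fin n → ℕ) : Option (Fin n) → Finset (Fin n → ℕ)
  | none => {β ∈ degSet n D | ∀ j, β j < α j}
  | some i => {β ∈ degSet n D | β i = α i ∧ ∀ j, j ≠ i → β j < α j}

def witnessTest {ι X : Type*} [DecidableEq X] : Option ι → Finset X → ℝ
  | none => fun H => if H = ∅ then 1 else 0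
  | some _ => fun H => if H.Nonempty then 1 else 0

lemma witnessPart_subset {n : ℕ} (D : ℕ) (α : Fin n → ℕ) (o : Option (Fin n)) :
    witnessPart D α o ⊆ degSet n D := by
  cases o <;> exact filter_subset _ _

lemma pairwiseDisjoint_witnessPart {n : ℕ} (D : ℕ) (α : Fin n → ℕ) :
    (Set.univ : Set (Option (Fin n))).PairwiseDisjoint (witnessPart D α) := by
  rintro (_ | i) - (_ | j) - hne
  · exact absurd rfl hne
  · exact disjoint_filter.2 fun β _ hbelow hface => (hbelow j).ne hface.1
  · exact disjoint_filter.2 fun β _ hface hbelow => (hbelow i).ne hface.1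
  · exact disjoint_filter.2 fun β _ hi hj =>
      (hj.2 i fun h => hne (congrArg some h)).ne hi.1

lemma indicator_wEvent_eq_prod {n D : ℕ} (α : Fin n → ℕ) {G : Finset (Fin n → ℕ)}
    (hG : G ⊆ degSet n D) :
    Set.indicator {G | wEvent α G} (fun _ => (1 : ℝ)) G =
      ∏ o, witnessTest o (G ∩ witnessPart D α o) := by
  have hinter : ∀ (P : (Fin n → ℕ) → Prop) [DecidablePred P],
      G ∩ {β ∈ degSet n D | P β} = {β ∈ G | P β} := fun P _ => by
    rw [inter_filter, inter_eq_left.2 hG]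
  simp only [Fintype.prod_option, witnessPart, witnessTest, hinter, filter_eq_empty_iff,
    filter_nonempty_iff, prod_boole, Set.indicator_apply, Set.mem_ofPred_eq, wEvent]
  rw [ite_zero_mul_ite_zero, mul_one]
  simp only [mem_univ, true_imp_iff, not_exists, not_and, and_comm]

lemma card_witnessPart_none {n D a : ℕ} (hn : 1 ≤ n) {α : Fin n → ℕ}
    (hsum : ∑ i, α i = D + a) (hge : ∀ i, a ≤ α i) :
    #(witnessPart D α none) = mfun n ((a : ℤ) - n) := by
  have hcard := card_filter_lt_antidiagonalTuple hn D α fun j => by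
    have := hge j
    rw [hsum]
    omega
  rw [hsum, show ((D + a : ℕ) : ℤ) - n - D = a - n by push_cast; ring] at hcard
  exact hcard

lemma card_witnessPart_some {m D a : ℕ} (hm : 1 ≤ m) {α : Fin (m + 1) → ℕ}
    (hsum : ∑ i, α i = D + a) (hge : ∀ i, a ≤ α i) (i : Fin (m + 1)) :
    #(witnessPart D α (some i)) = mfun m ((a : ℤ) - m) := by
  have hsplit : α i + ∑ k, i.removeNth α k = D + a := by
    rw [← hsum, Fin.sum_univ_succAbove α i]
    rfl
  have hαi : α i ≤ D := by
    have := single_le_sum (fun k _ => Nat.zero_le (i.removeNth α k)) (mem_univ ⟨0, hm⟩)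
    have := hge (i.succAbove ⟨0, hm⟩)
    simp only [Fin.removeNth_apply] at *
    omega
  have hface : ∀ β : Fin (m + 1) → ℕ, (β i = α i ∧ ∀ j, j ≠ i → β j < α j) ↔
      (β i = α i ∧ ∀ k, i.removeNth β k < i.removeNth α k) := fun β => by
    simp [i.forall_iff_succAbove, Fin.succAbove_ne, Fin.removeNth_apply]
  have hcard := card_filter_lt_antidiagonalTuple hm (D - α i) (i.removeNth α) fun k => by
    have := hge (i.succAbove k)
    simp only [Fin.removeNth_apply] at *
    omega
  rw [witnessPart, filter_congr fun β _ => hface β, degSet,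
    card_filter_removeNth_antidiagonalTuple i hαi (fun γ => ∀ k, γ k < i.removeNth α k), hcard]
  congr 1
  omega

theorem prob_witness_event_eq_general
    (n D : ℕ) (hn : 2 ≤ n) (p q : ℝ)
    (hq : q = 1 - p) (a : ℕ) (α : Fin n → ℕ)
    (hsum : ∑ i, α i = D + a) (hge : ∀ i, a ≤ α i) :
    grmPr n D p {G | wEvent α G} =
      (1 - q ^ mfun (n - 1) ((a : ℤ) - n + 1)) ^ n * q ^ mfun n ((a : ℤ) - n) := by
  obtain ⟨m, rfl⟩ : ∃ m, n = m + 1 := ⟨n - 1, by omega⟩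
  have hevent : grmPr (m + 1) D p {G | wEvent α G} = bernoulliExpectation p (degSet (m + 1) D)
      fun G => ∏ o, witnessTest o (G ∩ witnessPart D α o) :=
    sum_congr rfl fun G hG => by rw [indicator_wEvent_eq_prod α (mem_powerset.1 hG)]
  rw [hevent, bernoulliExpectation_prod p univ _ _ (fun o _ => witnessPart_subset D α o)
    (by simpa using pairwiseDisjoint_witnessPart D α), Fintype.prod_option]
  simp only [witnessTest, bernoulliExpectation_eq_empty, bernoulliExpectation_nonempty,
    card_witnessPart_none (by omega) hsum hge, card_witnessPart_some (by omega) hsum hge,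
    prod_const, card_univ, Fintype.card_fin, ← hq]
  rw [mul_comm, Nat.add_sub_cancel, show (a : ℤ) - (m + 1 : ℕ) + 1 = a - m by push_cast; ring]

theorem prob_witness_event_eq
    (n D : ℕ) (hn : 2 ≤ n) (hD : 1 ≤ D) (p q : ℝ) (hp : p ∈ Set.Icc (0:ℝ) 1)
    (hq : q = 1 - p) (a : ℕ) (ha : 1 ≤ a) (α : Fin n → ℕ)
    (hsum : ∑ i, α i = D + a) (hge : ∀ i, a ≤ α i) :
    grmPr n D p {G | wEvent α G} =
      (1 - q ^ mfun (n - 1) ((a : ℤ) - n + 1)) ^ n * q ^ mfun n ((a : ℤ) - n) :=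
  prob_witness_event_eq_general n D hn p q hq a α hsum hge
end

section
/- Let n ≥ 2, D ≥ 1, p ∈ [0,1], let a, b ≥ 1 be integers, and let α, β ∈ ℕ^n be distinct vectors with α_1+⋯+α_n = D+a, α_i ≥ a for all i, β_1+⋯+β_n = D+b, and β_i ≥ b for all i. For the random set G of the graded model M(n,D,p): (a) if Σ_i min(α_i, β_i) < D, then the witness events w_α and w_β are independent; (b) if α_i ≤ β_i for all i, then w_α and w_β are mutually exclusive, i.e., the probability that both w_α and w_β occur is 0. -/
/-!
Under a product of Bernoulli measures, events determined by disjoint sets of coordinates are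
independent. The event `w_α` only looks at the part of `G` lying below `α`, and no vector of
degree `D` lies below both `α` and `β` when `∑ i, min (α i) (β i) < D`; this gives (a).
For (b), if `α < β` then a witness of `w_α` in a coordinate where `α i < β i` lies strictly
below `β`, which `w_β` forbids.
-/

open Finset Filter

section Bernoulli

variable {X : Type*}

def bernWeight (p : ℝ) (Ω G : Finset X) : ℝ := p ^ #G * (1 - p) ^ (#Ω - #G)

noncomputable def bernPr (p : ℝ) (Ω : Finset X) (E : Set (Finset X)) : ℝ :=
  ∑ G ∈ Ω.powerset, E.indicator 1 G * bernWeight p Ω G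

def IsDeterminedBy [DecidableEq X] (Ω A : Finset X) (E : Set (Finset X)) : Prop :=
  ∀ G ⊆ Ω, G ∈ E ↔ G ∩ A ∈ E

theorem IsDeterminedBy.mono [DecidableEq X] {Ω A B : Finset X} {E : Set (Finset X)}
    (hE : IsDeterminedBy Ω A E) (hAB : A ⊆ B) : IsDeterminedBy Ω B E := fun G hG => by
  rw [hE G hG, hE (G ∩ B) (inter_subset_left.trans hG), inter_assoc, inter_eq_right.2 hAB]

theorem isDeterminedBy_univ [DecidableEq X] (Ω A : Finset X) :
    IsDeterminedBy Ω A Set.univ :=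
  fun _ _ => iff_of_true trivial trivial

theorem union_inter_eq_left_of_disjoint [DecidableEq X] {A B S T : Finset X} (hAB : Disjoint A B)
    (hS : S ⊆ A) (hT : T ⊆ B) : (S ∪ T) ∩ A = S := by
  rw [union_inter_distrib_right, inter_eq_left.2 hS,
    disjoint_iff_inter_eq_empty.1 (hAB.symm.mono_left hT), union_empty]

theorem union_inter_eq_right_of_disjoint [DecidableEq X] {A B S T : Finset X} (hAB : Disjoint A B)
    (hS : S ⊆ A) (hT : T ⊆ B) : (S ∪ T) ∩ B = T := by
  rw [union_comm]
  exact union_inter_eq_left_of_disjoint hAB.symm hT hS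

theorem sum_powerset_union_of_disjoint [DecidableEq X] {M : Type*} [AddCommMonoid M]
    {A B : Finset X} (hAB : Disjoint A B) (f : Finset X → M) :
    ∑ G ∈ (A ∪ B).powerset, f G = ∑ S ∈ A.powerset, ∑ T ∈ B.powerset, f (S ∪ T) := by
  rw [← sum_product']
  refine sum_nbij' (fun G => (G ∩ A, G ∩ B)) (fun ST => ST.1 ∪ ST.2) ?_ ?_ ?_ ?_ ?_ <;>
    simp only [mem_powerset, mem_product, Prod.forall, ← inter_union_distrib_left]
  · exact fun _ _ => ⟨inter_subset_right, inter_subset_right⟩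
  · exact fun _ _ h => union_subset_union h.1 h.2
  · exact fun _ => inter_eq_left.2
  · exact fun S T h => Prod.ext (union_inter_eq_left_of_disjoint hAB h.1 h.2)
      (union_inter_eq_right_of_disjoint hAB h.1 h.2)
  · exact fun _ h => by rw [inter_eq_left.2 h]

theorem bernWeight_union [DecidableEq X] {A B S T : Finset X} (hAB : Disjoint A B) (hS : S ⊆ A)
    (hT : T ⊆ B) (p : ℝ) :
    bernWeight p (A ∪ B) (S ∪ T) = bernWeight p A S * bernWeight p B T := by
  have hS' := card_le_card hS
  have hT' := card_le_card hT
  rw [bernWeight, bernWeight, bernWeight, card_union_of_disjoint hAB,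
    card_union_of_disjoint (hAB.mono hS hT),
    show #A + #B - (#S + #T) = (#A - #S) + (#B - #T) by omega, pow_add, pow_add]
  ring

theorem bernPr_univ (p : ℝ) (Ω : Finset X) : bernPr p Ω Set.univ = 1 := by
  simp [bernPr, bernWeight, sum_pow_mul_eq_add_pow]

theorem bernPr_empty (p : ℝ) (Ω : Finset X) : bernPr p Ω ∅ = 0 := by
  simp [bernPr]

theorem bernPr_union_inter [DecidableEq X] {A B : Finset X} {E F : Set (Finset X)}
    (hAB : Disjoint A B) (hE : IsDeterminedBy (A ∪ B) A E) (hF : IsDeterminedBy (A ∪ B) B F)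
    (p : ℝ) : bernPr p (A ∪ B) (E ∩ F) = bernPr p A E * bernPr p B F := by
  rw [bernPr, sum_powerset_union_of_disjoint hAB, bernPr, bernPr, sum_mul_sum]
  refine sum_congr rfl fun S hS => sum_congr rfl fun T hT => ?_
  rw [mem_powerset] at hS hT
  have hST : S ∪ T ⊆ A ∪ B := union_subset_union hS hT
  have hES : S ∪ T ∈ E ↔ S ∈ E := by
    rw [hE _ hST, union_inter_eq_left_of_disjoint hAB hS hT]
  have hFT : S ∪ T ∈ F ↔ T ∈ F := by
    rw [hF _ hST, union_inter_eq_right_of_disjoint hAB hS hT]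
  classical
  rw [Set.inter_indicator_one]
  simp only [Pi.mul_apply, Set.indicator_apply, Pi.one_apply, hES, hFT,
    bernWeight_union hAB hS hT p]
  ring

theorem exists_disjoint_union_eq_of_subset [DecidableEq X] {A Ω : Finset X} (hA : A ⊆ Ω) :
    ∃ C, Disjoint A C ∧ Ω = A ∪ C :=
  ⟨Ω \ A, disjoint_sdiff, (union_sdiff_of_subset hA).symm⟩

theorem IsDeterminedBy.bernPr_eq [DecidableEq X] {Ω A : Finset X} {E : Set (Finset X)}
    (hE : IsDeterminedBy Ω A E) (hA : A ⊆ Ω) (p : ℝ) : bernPr p Ω E = bernPr p A E := by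
  obtain ⟨C, hAC, rfl⟩ := exists_disjoint_union_eq_of_subset hA
  calc bernPr p (A ∪ C) E = bernPr p (A ∪ C) (E ∩ Set.univ) := by rw [Set.inter_univ]
    _ = bernPr p A E := by
      rw [bernPr_union_inter hAC hE (isDeterminedBy_univ _ _), bernPr_univ, mul_one]

theorem bernPr_inter_of_disjoint [DecidableEq X] {Ω A B : Finset X} {E F : Set (Finset X)}
    (hA : A ⊆ Ω) (hB : B ⊆ Ω) (hAB : Disjoint A B) (hE : IsDeterminedBy Ω A E)
    (hF : IsDeterminedBy Ω B F) (p : ℝ) :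
    bernPr p Ω (E ∩ F) = bernPr p Ω E * bernPr p Ω F := by
  obtain ⟨C, hAC, rfl⟩ := exists_disjoint_union_eq_of_subset hA
  have hBC : B ⊆ C := fun x hx =>
    (mem_union.1 (hB hx)).resolve_left (disjoint_right.1 hAB hx)
  have hF' := hF.mono hBC
  rw [bernPr_union_inter hAC hE hF', hE.bernPr_eq subset_union_left,
    hF'.bernPr_eq subset_union_right]

end Bernoulli

theorem grmPr_eq_bernPr (n D : ℕ) (p : ℝ) (E : Set (Finset (Fin n → ℕ))) :
    grmPr n D p E = bernPr p (degSet n D) E :=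
  rfl

section Witness

variable {n : ℕ}

theorem wEvent_filter_le_iff (α : Fin n → ℕ) (G : Finset (Fin n → ℕ)) :
    wEvent α (G.filter fun γ => ∀ i, γ i ≤ α i) ↔ wEvent α G := by
  have le_of_witness {γ : Fin n → ℕ} {i : Fin n} (hi : γ i = α i)
      (hlt : ∀ j, j ≠ i → γ j < α j) (j : Fin n) : γ j ≤ α j := by
    rcases eq_or_ne j i with rfl | hj
    exacts [hi.le, (hlt j hj).le]
  constructor
  · rintro ⟨hwitness, hnone⟩
    refine ⟨fun i => ?_, fun ⟨γ, hγ, hlt⟩ => hnone ⟨γ, mem_filter.2 ⟨hγ, fun j => (hlt j).le⟩, hlt⟩⟩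
    obtain ⟨γ, hγ, hγi, hγlt⟩ := hwitness i
    exact ⟨γ, (mem_filter.1 hγ).1, hγi, hγlt⟩
  · rintro ⟨hwitness, hnone⟩
    refine ⟨fun i => ?_, fun ⟨γ, hγ, hlt⟩ => hnone ⟨γ, (mem_filter.1 hγ).1, hlt⟩⟩
    obtain ⟨γ, hγ, hγi, hγlt⟩ := hwitness i
    exact ⟨γ, mem_filter.2 ⟨hγ, le_of_witness hγi hγlt⟩, hγi, hγlt⟩

theorem isDeterminedBy_wEvent (Ω : Finset (Fin n → ℕ)) (α : Fin n → ℕ) :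
    IsDeterminedBy Ω (Ω.filter fun γ => ∀ i, γ i ≤ α i) {G | wEvent α G} := fun G hG => by
  rw [Set.mem_ofPred_eq, Set.mem_ofPred_eq, inter_filter, inter_eq_left.2 hG,
    wEvent_filter_le_iff]

theorem disjoint_filter_le_of_sum_min_lt {D : ℕ} {α β : Fin n → ℕ}
    (h : ∑ i, min (α i) (β i) < D) :
    Disjoint ((degSet n D).filter fun γ => ∀ i, γ i ≤ α i)
      ((degSet n D).filter fun γ => ∀ i, γ i ≤ β i) :=
  disjoint_left.2 fun γ hα hβ => by
    rw [mem_filter] at hα hβ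
    have hγ : ∑ i, γ i = D := Finset.Nat.mem_antidiagonalTuple.1 hα.1
    have : ∑ i, γ i ≤ ∑ i, min (α i) (β i) := sum_le_sum fun i _ => le_min (hα.2 i) (hβ.2 i)
    omega

theorem not_wEvent_and_wEvent_of_lt {α β : Fin n → ℕ} (h : α < β) (G : Finset (Fin n → ℕ)) :
    ¬ (wEvent α G ∧ wEvent β G) := by
  rintro ⟨⟨hwitness, -⟩, -, hnone⟩
  obtain ⟨hle, i, hi⟩ := Pi.lt_def.1 h
  obtain ⟨γ, hγG, hγi, hγlt⟩ := hwitness i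
  refine hnone ⟨γ, hγG, fun j => ?_⟩
  rcases eq_or_ne j i with rfl | hj
  · exact hγi ▸ hi
  · exact (hγlt j hj).trans_le (hle j)

end Witness

theorem witness_events_independent_or_exclusive_general
    (n D : ℕ) (p : ℝ) (α β : Fin n → ℕ) (hne : α ≠ β) :
    ((∑ i, min (α i) (β i)) < D →
      grmPr n D p {G | wEvent α G ∧ wEvent β G} =
        grmPr n D p {G | wEvent α G} * grmPr n D p {G | wEvent β G}) ∧
    ((∀ i, α i ≤ β i) →
      grmPr n D p {G | wEvent α G ∧ wEvent β G} = 0) := by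
  simp only [grmPr_eq_bernPr]
  refine ⟨fun hmin => ?_, fun hle => ?_⟩
  · rw [Set.ofPred_and]
    exact bernPr_inter_of_disjoint (filter_subset _ _) (filter_subset _ _)
      (disjoint_filter_le_of_sum_min_lt hmin) (isDeterminedBy_wEvent _ α)
      (isDeterminedBy_wEvent _ β) p
  · have hempty : {G | wEvent α G ∧ wEvent β G} = ∅ := Set.eq_empty_of_forall_notMem
      (not_wEvent_and_wEvent_of_lt (lt_of_le_of_ne (show α ≤ β from hle) hne))
    rw [hempty, bernPr_empty]

theorem witness_events_independent_or_exclusive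
    (n D : ℕ) (hn : 2 ≤ n) (hD : 1 ≤ D) (p : ℝ) (hp : p ∈ Set.Icc (0:ℝ) 1)
    (a b : ℕ) (ha : 1 ≤ a) (hb : 1 ≤ b) (α β : Fin n → ℕ) (hne : α ≠ β)
    (hsumα : ∑ i, α i = D + a) (hgeα : ∀ i, a ≤ α i)
    (hsumβ : ∑ i, β i = D + b) (hgeβ : ∀ i, b ≤ β i) :
    ((∑ i, min (α i) (β i)) < D →
      grmPr n D p {G | wEvent α G ∧ wEvent β G} =
        grmPr n D p {G | wEvent α G} * grmPr n D p {G | wEvent β G}) ∧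
    ((∀ i, α i ≤ β i) →
      grmPr n D p {G | wEvent α G ∧ wEvent β G} = 0) :=
  witness_events_independent_or_exclusive_general n D p α β hne
end

section
/- Let n ≥ 2, D ≥ 1, p ∈ [0,1], q = 1 − p, let a ≥ 1 be an integer, and let α ∈ ℕ^n satisfy α_1+⋯+α_n = D + a and α_i ≥ a for all i; set m = m_{n−1}(a−n+1). Then for the random set G of the graded model M(n,D,p), the probability of the non-Scarf witness event y_α equals ((1 − q^m)^n − (m·p·q^{m−1})^n) · q^{m_n(a−n)}. -/
open Finset Filter

/-- The non-Scarf witness event `y_α`: every "facet" `{β : β i = α i, β j < α j ∀ j ≠ i}`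
contains an element of `G`, at least one of them contains two distinct elements of `G`,
and `G` contains no `β` with `β j < α j` for all `j`. -/
def yEvent {n : ℕ} (α : Fin n → ℕ) (G : Finset (Fin n → ℕ)) : Prop :=
  (∀ i, ∃ β ∈ G, β i = α i ∧ ∀ j, j ≠ i → β j < α j) ∧
  (∃ i, ∃ β ∈ G, ∃ γ ∈ G, β ≠ γ ∧
    (β i = α i ∧ ∀ j, j ≠ i → β j < α j) ∧ (γ i = α i ∧ ∀ j, j ≠ i → γ j < α j)) ∧
  ¬ ∃ β ∈ G, ∀ j, β j < α j

/-!
The facets `F i = {β ∈ Ω_D | β i = α i, β j < α j for j ≠ i}` and the set `B` of points of `Ω_D`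
strictly below `α` are pairwise disjoint, so under the product measure the traces of `G` on them are
independent. The event `y_α` says that `G` misses `B` and meets every facet, but not exactly once
each; its probability is therefore `q^|B| ∏ᵢ (1 - q^|F i|) - q^|B| ∏ᵢ |F i| p q^(|F i| - 1)`.
Reflecting `β ↦ α - 1 - β` (keeping the coordinate `i` of a facet fixed) identifies `B` with
`Ω_{a-n}` in `n` variables and each facet with `Ω_{a-n+1}` in `n - 1` variables, which gives
`|B| = m_n(a-n)` and `|F i| = m_{n-1}(a-n+1)`.
-/

section BernoulliSubsets

open Function

variable {κ : Type*}

theorem pow_mul_pow_card_sub_eq_prod [DecidableEq κ] {R : Type*} [CommMonoid R] (a b : R)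
    {S H : Finset κ} (hHS : H ⊆ S) : a ^ #H * b ^ (#S - #H) = ∏ x ∈ S, if x ∈ H then a else b := by
  rw [prod_ite, prod_const, prod_const, filter_mem_eq_inter, inter_eq_right.2 hHS,
    filter_notMem_eq_sdiff, card_sdiff_of_subset hHS]

theorem sum_powerset_biUnion_prod_inter [DecidableEq κ] {ι R : Type*} [Fintype ι]
    [DecidableEq ι] [CommSemiring R] (S : ι → Finset κ) (hS : Pairwise (Disjoint on S))
    (f : ι → Finset κ → R) :
    ∑ G ∈ (univ.biUnion S).powerset, ∏ i, f i (G ∩ S i) =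
      ∏ i, ∑ H ∈ (S i).powerset, f i H := by
  rw [prod_univ_sum]
  refine sum_nbij' (fun G i => G ∩ S i) (fun H => univ.biUnion H) ?_ ?_ ?_ ?_ fun _ _ => rfl
  · intro G _
    simp [inter_subset_right]
  · intro H hH
    simp only [Fintype.mem_piFinset, mem_powerset] at hH
    simpa using fun i => (hH i).trans (subset_biUnion_of_mem S (mem_univ i))
  · intro G hG
    simp only [mem_powerset] at hG
    ext x
    simp only [mem_biUnion, mem_univ, true_and, mem_inter]
    exact ⟨fun ⟨_, h, _⟩ => h, fun h => by simpa [h] using hG h⟩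
  · intro H hH
    simp only [Fintype.mem_piFinset, mem_powerset] at hH
    funext i
    ext x
    simp only [mem_inter, mem_biUnion, mem_univ, true_and]
    refine ⟨fun ⟨⟨j, hj⟩, hi⟩ => ?_, fun h => ⟨⟨i, h⟩, hH i h⟩⟩
    obtain rfl : j = i := by
      by_contra hji
      exact disjoint_left.1 (hS hji) (hH j hj) hi
    exact hj

theorem pow_mul_pow_card_sub_biUnion_eq_prod [DecidableEq κ] {ι R : Type*} [Fintype ι]
    [CommMonoid R] (a b : R) (S : ι → Finset κ) (hS : Pairwise (Disjoint on S)) {G : Finset κ}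
    (hG : G ⊆ univ.biUnion S) :
    a ^ #G * b ^ (#(univ.biUnion S) - #G) =
      ∏ i, a ^ #(G ∩ S i) * b ^ (#(S i) - #(G ∩ S i)) := by
  rw [pow_mul_pow_card_sub_eq_prod a b hG, prod_biUnion (hS.set_pairwise _)]
  refine prod_congr rfl fun i _ => ?_
  rw [pow_mul_pow_card_sub_eq_prod a b inter_subset_right]
  exact prod_congr rfl fun x hx => by simp [hx]

noncomputable def bernoulliPr (p : ℝ) (S : Finset κ) (E : Set (Finset κ)) : ℝ :=
  ∑ H ∈ S.powerset, E.indicator (fun _ => 1) H * (p ^ #H * (1 - p) ^ (#S - #H))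

section Block

variable (p : ℝ) (S : Finset κ)

theorem bernoulliPr_congr {E E' : Set (Finset κ)} (h : ∀ H ⊆ S, H ∈ E ↔ H ∈ E') :
    bernoulliPr p S E = bernoulliPr p S E' := by
  classical
  refine sum_congr rfl fun H hH => ?_
  simp only [Set.indicator_apply, h H (mem_powerset.1 hH)]

theorem bernoulliPr_sdiff {E E' : Set (Finset κ)} (h : E' ⊆ E) :
    bernoulliPr p S (E \ E') = bernoulliPr p S E - bernoulliPr p S E' := by
  simp only [bernoulliPr, Set.indicator_sdiff h, Pi.sub_apply, sub_mul, sum_sub_distrib]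

theorem bernoulliPr_univ : bernoulliPr p S Set.univ = 1 := by
  simp [bernoulliPr, sum_pow_mul_eq_add_pow]

theorem bernoulliPr_compl (E : Set (Finset κ)) :
    bernoulliPr p S Eᶜ = 1 - bernoulliPr p S E := by
  rw [Set.compl_eq_univ_sdiff, bernoulliPr_sdiff p S (Set.subset_univ E), bernoulliPr_univ]

theorem bernoulliPr_singleton_empty : bernoulliPr p S {∅} = (1 - p) ^ #S := by
  rw [bernoulliPr, sum_eq_single_of_mem ∅ (empty_mem_powerset S) fun H _ hH => by simp [hH]]
  simp

theorem bernoulliPr_nonempty : bernoulliPr p S {H | H.Nonempty} = 1 - (1 - p) ^ #S := by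
  rw [← bernoulliPr_singleton_empty, ← bernoulliPr_compl]
  congr 1
  ext H
  simp [nonempty_iff_ne_empty]

theorem bernoulliPr_card_eq_one :
    bernoulliPr p S {H | #H = 1} = #S * p * (1 - p) ^ (#S - 1) := by
  classical
  simp only [bernoulliPr, Set.indicator_apply, Set.mem_ofPred_eq, ite_mul, one_mul, zero_mul]
  rw [← sum_filter, ← powersetCard_eq_filter,
    sum_congr rfl fun H hH => by rw [(mem_powersetCard.1 hH).2, pow_one]]
  simp [mul_assoc]

end Block

theorem pairwise_disjoint_option_elim {ι α : Type*} [PartialOrder α] [OrderBot α] {S : ι → α}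
    (hS : Pairwise (Disjoint on S)) {T : α} (hST : ∀ i, Disjoint (S i) T) :
    Pairwise (Disjoint on fun o : Option ι => o.elim T S) := by
  rintro (_ | i) (_ | j) hij
  · exact absurd rfl hij
  · exact (hST j).symm
  · exact hST i
  · exact hS fun h => hij (congrArg some h)

variable [DecidableEq κ] {ι : Type*} [Fintype ι] (p : ℝ) (S : ι → Finset κ)
  (hS : Pairwise (Disjoint on S))
include hS

theorem bernoulliPr_forall_inter_biUnion (E : ι → Set (Finset κ)) :
    bernoulliPr p (univ.biUnion S) {G | ∀ i, G ∩ S i ∈ E i} =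
      ∏ i, bernoulliPr p (S i) (E i) := by
  classical
  simp only [bernoulliPr, ← sum_powerset_biUnion_prod_inter S hS]
  refine sum_congr rfl fun G hG => ?_
  rw [pow_mul_pow_card_sub_biUnion_eq_prod _ _ S hS (mem_powerset.1 hG)]
  simp only [Set.indicator_apply, ite_mul, one_mul, zero_mul, prod_ite_zero, Set.mem_ofPred_eq,
    mem_univ, true_imp_iff]

theorem bernoulliPr_forall_inter {Ω : Finset κ} (hSΩ : ∀ i, S i ⊆ Ω) (E : ι → Set (Finset κ)) :
    bernoulliPr p Ω {G | ∀ i, G ∩ S i ∈ E i} = ∏ i, bernoulliPr p (S i) (E i) := by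
  -- `Ω \ ⋃ i, S i` becomes one more block, carrying the sure event.
  set S' : Option ι → Finset κ := fun o => o.elim (Ω \ univ.biUnion S) S
  have hS' : Pairwise (Disjoint on S') := pairwise_disjoint_option_elim hS fun i =>
    disjoint_sdiff_self_left.symm.mono_left (subset_biUnion_of_mem S (mem_univ i))
  have hΩ : univ.biUnion S' = Ω := by
    ext x
    rw [mem_biUnion]
    refine ⟨fun ⟨o, _, hx⟩ => ?_, fun hx => ?_⟩
    · cases o with
      | none => exact (mem_sdiff.1 hx).1
      | some i => exact hSΩ i hx
    · by_cases h : x ∈ univ.biUnion S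
      · obtain ⟨i, -, hi⟩ := mem_biUnion.1 h
        exact ⟨some i, mem_univ _, hi⟩
      · exact ⟨none, mem_univ _, mem_sdiff.2 ⟨hx, h⟩⟩
  have := bernoulliPr_forall_inter_biUnion p S' hS' fun o => o.elim Set.univ E
  rw [hΩ, Fintype.prod_option] at this
  simpa [S', Option.forall, bernoulliPr_univ] using this

theorem bernoulliPr_inter_eq_empty_and_forall {Ω B : Finset κ} (hSB : ∀ i, Disjoint (S i) B)
    (hSΩ : ∀ i, S i ⊆ Ω) (hBΩ : B ⊆ Ω) (Q : Set (Finset κ)) :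
    bernoulliPr p Ω {G | G ∩ B = ∅ ∧ ∀ i, G ∩ S i ∈ Q} =
      (1 - p) ^ #B * ∏ i, bernoulliPr p (S i) Q := by
  have := bernoulliPr_forall_inter p _ (pairwise_disjoint_option_elim hS hSB) (Ω := Ω)
    (Option.rec hBΩ hSΩ) fun o => o.elim {∅} fun _ => Q
  rw [Fintype.prod_option] at this
  simpa [Option.forall, bernoulliPr_singleton_empty] using this

end BernoulliSubsets

theorem grmPr_eq_bernoulliPr (n D : ℕ) (p : ℝ) (E : Set (Finset (Fin n → ℕ))) :
    grmPr n D p E = bernoulliPr p (degSet n D) E :=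
  rfl

namespace Finset.Nat

theorem card_antidiagonalTuple_succ (k d : ℕ) :
    #(antidiagonalTuple (k + 1) d) = (d + k).choose k := by
  classical
  rw [card_equiv Finsupp.equivFunOnFinite.symm
      (t := (univ : Finset (Fin (k + 1))).finsuppAntidiag d) fun f => by
        simp [mem_antidiagonalTuple],
    card_finsuppAntidiag_nat_eq_choose, card_univ, Fintype.card_fin,
    show k + 1 + d - 1 = d + k by omega, Nat.choose_symm_add]

theorem card_filter_le_antidiagonalTuple {k t s : ℕ} {c : Fin k → ℕ} (hsum : ∑ j, c j = t + s)
    (hc : ∀ j, s ≤ c j) :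
    #{β ∈ antidiagonalTuple k t | ∀ j, β j ≤ c j} = #(antidiagonalTuple k s) := by
  have le_of_mem {γ : Fin k → ℕ} {r : ℕ} (hγ : γ ∈ antidiagonalTuple k r) (j : Fin k) :
      γ j ≤ r :=
    (mem_antidiagonalTuple.1 hγ) ▸ single_le_sum (fun _ _ => Nat.zero_le _) (mem_univ j)
  refine card_nbij' (c - ·) (c - ·) ?_ ?_ ?_ ?_
  · intro β hβ
    simp only [coe_filter, Set.mem_ofPred_eq, mem_antidiagonalTuple] at hβ
    rw [mem_coe, mem_antidiagonalTuple]
    change ∑ j, (c j - β j) = s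
    rw [sum_tsub_distrib _ fun j _ => hβ.2 j, hsum, hβ.1, Nat.add_sub_cancel_left]
  · intro γ hγ
    have hγc : γ ≤ c := fun j => (le_of_mem hγ j).trans (hc j)
    rw [mem_coe, mem_antidiagonalTuple] at hγ
    rw [mem_coe, mem_filter, mem_antidiagonalTuple]
    refine ⟨?_, fun j => tsub_le_self⟩
    change ∑ j, (c j - γ j) = t
    rw [sum_tsub_distrib _ fun j _ => hγc j, hsum, hγ, Nat.add_sub_cancel]
  · intro β hβ
    exact tsub_tsub_cancel_of_le (mem_filter.1 hβ).2
  · intro γ hγ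
    exact tsub_tsub_cancel_of_le fun j => (le_of_mem hγ j).trans (hc j)

theorem card_filter_lt_antidiagonalTuple {k t : ℕ} (hk : 1 ≤ k) {u : Fin k → ℕ} {e : ℤ}
    (hsum : ∑ j, (u j : ℤ) = t + k + e) (hu : ∀ j, e < u j) :
    #{β ∈ antidiagonalTuple k t | ∀ j, β j < u j} = mfun k e := by
  rcases lt_or_ge e 0 with he | he
  · rw [mfun, if_neg he.not_ge, card_eq_zero, filter_eq_empty_iff]
    intro β hβ hβu
    have : ∑ j, (β j + 1) ≤ ∑ j, u j := sum_le_sum fun j _ => hβu j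
    rw [sum_add_distrib, (mem_antidiagonalTuple.1 hβ)] at this
    simp only [sum_const, card_univ, Fintype.card_fin, smul_eq_mul, mul_one] at this
    rw [← Nat.cast_sum] at hsum
    omega
  · lift e to ℕ using he
    obtain ⟨k, rfl⟩ : ∃ k', k = k' + 1 := ⟨k - 1, by omega⟩
    have hu1 : ∀ j, 1 ≤ u j := fun j => by have := hu j; omega
    rw [filter_congr fun β _ => forall_congr' fun j => Nat.lt_iff_le_pred (hu1 j),
      card_filter_le_antidiagonalTuple (s := e) ?_ fun j => by have := hu j; omega,
      card_antidiagonalTuple_succ, mfun, if_pos (Int.natCast_nonneg e)]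
    · simp
    · zify [hu1]
      simp only [sum_sub_distrib, sum_const, card_univ, Fintype.card_fin, nsmul_eq_mul, mul_one]
      push_cast at hsum ⊢
      linarith

theorem card_filter_apply_eq_antidiagonalTuple {m t x : ℕ} (i : Fin (m + 1)) (hx : x ≤ t)
    (P : (Fin m → ℕ) → Prop) [DecidablePred P] :
    #{β ∈ antidiagonalTuple (m + 1) t | β i = x ∧ P (i.removeNth β)} =
      #{δ ∈ antidiagonalTuple m (t - x) | P δ} := by
  refine card_nbij' i.removeNth (i.insertNth (α := fun _ => ℕ) x) ?_ ?_ ?_ ?_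
  · intro β hβ
    simp only [coe_filter, Set.mem_ofPred_eq, mem_antidiagonalTuple] at hβ
    simp only [coe_filter, Set.mem_ofPred_eq, mem_antidiagonalTuple]
    refine ⟨?_, hβ.2.2⟩
    have := Fin.add_sum_removeNth i β
    omega
  · intro δ hδ
    simp only [coe_filter, Set.mem_ofPred_eq, mem_antidiagonalTuple] at hδ
    simp only [coe_filter, Set.mem_ofPred_eq, mem_antidiagonalTuple, Fin.sum_insertNth,
      Fin.insertNth_apply_same, Fin.removeNth_insertNth]
    exact ⟨by omega, trivial, hδ.2⟩
  · intro β hβ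
    simp only [coe_filter, Set.mem_ofPred_eq] at hβ
    rw [Fin.insertNth_removeNth, Function.update_eq_self_iff, hβ.2.1]
  · intro δ _
    exact Fin.removeNth_insertNth (α := fun _ => ℕ) i x δ

end Finset.Nat

section Witness

open Function

variable {n : ℕ} (α : Fin n → ℕ)

def facet (i : Fin n) (S : Finset (Fin n → ℕ)) : Finset (Fin n → ℕ) :=
  {β ∈ S | β i = α i ∧ ∀ j, j ≠ i → β j < α j}

def strictlyBelow (S : Finset (Fin n → ℕ)) : Finset (Fin n → ℕ) :=
  {β ∈ S | ∀ j, β j < α j}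

theorem pairwise_disjoint_facet (S : Finset (Fin n → ℕ)) :
    Pairwise (Disjoint on fun i => facet α i S) :=
  fun i _ hij => disjoint_filter.2 fun _ _ hi hj => (hj.2 i hij).ne hi.1

theorem disjoint_facet_strictlyBelow (i : Fin n) (S : Finset (Fin n → ℕ)) :
    Disjoint (facet α i S) (strictlyBelow α S) :=
  disjoint_filter.2 fun _ _ hi hb => (hb i).ne hi.1

theorem inter_facet {G S : Finset (Fin n → ℕ)} (hGS : G ⊆ S) (i : Fin n) :
    G ∩ facet α i S = facet α i G := by
  rw [facet, facet, inter_filter, inter_eq_left.2 hGS]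

theorem inter_strictlyBelow {G S : Finset (Fin n → ℕ)} (hGS : G ⊆ S) :
    G ∩ strictlyBelow α S = strictlyBelow α G := by
  rw [strictlyBelow, strictlyBelow, inter_filter, inter_eq_left.2 hGS]

theorem yEvent_iff (G : Finset (Fin n → ℕ)) :
    yEvent α G ↔ (strictlyBelow α G = ∅ ∧ ∀ i, (facet α i G).Nonempty) ∧
      ¬(strictlyBelow α G = ∅ ∧ ∀ i, #(facet α i G) = 1) := by
  have hcover : (∀ i, ∃ β ∈ G, β i = α i ∧ ∀ j, j ≠ i → β j < α j) ↔
      ∀ i, (facet α i G).Nonempty := by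
    simp [facet, Finset.Nonempty]
  have hdouble : (∃ i, ∃ β ∈ G, ∃ γ ∈ G, β ≠ γ ∧ (β i = α i ∧ ∀ j, j ≠ i → β j < α j) ∧
      (γ i = α i ∧ ∀ j, j ≠ i → γ j < α j)) ↔ ∃ i, 1 < #(facet α i G) := by
    simp only [facet, one_lt_card, mem_filter]
    grind
  have hempty : (¬∃ β ∈ G, ∀ j, β j < α j) ↔ strictlyBelow α G = ∅ := by
    simp [strictlyBelow, filter_eq_empty_iff]
  rw [yEvent, hcover, hdouble, hempty]
  constructor
  · rintro ⟨hne, ⟨i, hi⟩, hB⟩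
    exact ⟨⟨hB, hne⟩, fun h => hi.ne' (h.2 i)⟩
  · rintro ⟨⟨hB, hne⟩, h⟩
    obtain ⟨i, hi⟩ := not_forall.1 fun h' => h ⟨hB, h'⟩
    exact ⟨hne, ⟨i, by have := card_pos.2 (hne i); omega⟩, hB⟩

variable {D a : ℕ} (hsum : ∑ i, α i = D + a) (hge : ∀ i, a ≤ α i)
include hsum hge

theorem card_strictlyBelow_degSet (hn : 1 ≤ n) :
    #(strictlyBelow α (degSet n D)) = mfun n ((a : ℤ) - n) := by
  refine Nat.card_filter_lt_antidiagonalTuple hn ?_ fun j => by have := hge j; omega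
  rw [← Nat.cast_sum, hsum]
  push_cast
  ring

theorem card_facet_degSet (hn : 2 ≤ n) (i : Fin n) :
    #(facet α i (degSet n D)) = mfun (n - 1) ((a : ℤ) - n + 1) := by
  obtain ⟨m, rfl⟩ : ∃ m, n = m + 1 := ⟨n - 1, by omega⟩
  have hsplit := Fin.add_sum_removeNth i α
  have hrest : a ≤ ∑ j, i.removeNth α j :=
    (hge _).trans (single_le_sum (f := i.removeNth α) (fun _ _ => Nat.zero_le _)
      (mem_univ (⟨0, by omega⟩ : Fin m)))
  have hαD : α i ≤ D := by omega
  have hfacet : facet α i (degSet (m + 1) D) = {β ∈ Nat.antidiagonalTuple (m + 1) D |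
      β i = α i ∧ ∀ j, i.removeNth β j < i.removeNth α j} :=
    filter_congr fun β _ => by simp [Fin.forall_iff_succAbove i, Fin.succAbove_ne, Fin.removeNth]
  rw [hfacet, Nat.card_filter_apply_eq_antidiagonalTuple i hαD
    (fun δ => ∀ j, δ j < i.removeNth α j), Nat.add_sub_cancel]
  refine Nat.card_filter_lt_antidiagonalTuple (by omega) ?_ fun j => ?_
  · rw [← Nat.cast_sum, Nat.cast_sub hαD]
    omega
  · have := hge (i.succAbove j)
    simp only [Fin.removeNth]
    omega

end Witness

theorem prob_nonScarf_witness_event_eq_general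
    (n D : ℕ) (hn : 2 ≤ n) (p q : ℝ)
    (hq : q = 1 - p) (a : ℕ) (α : Fin n → ℕ)
    (hsum : ∑ i, α i = D + a) (hge : ∀ i, a ≤ α i) :
    grmPr n D p {G | yEvent α G} =
      ((1 - q ^ mfun (n - 1) ((a : ℤ) - n + 1)) ^ n -
        ((mfun (n - 1) ((a : ℤ) - n + 1) : ℝ) * p *
          q ^ (mfun (n - 1) ((a : ℤ) - n + 1) - 1)) ^ n) *
        q ^ mfun n ((a : ℤ) - n) := by
  subst hq
  set Ω := degSet n D
  set B := strictlyBelow α Ω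
  have hprob (Q : Set (Finset (Fin n → ℕ))) :
      bernoulliPr p Ω {G | G ∩ B = ∅ ∧ ∀ i, G ∩ facet α i Ω ∈ Q} =
        (1 - p) ^ #B * ∏ i, bernoulliPr p (facet α i Ω) Q :=
    bernoulliPr_inter_eq_empty_and_forall p _ (pairwise_disjoint_facet α Ω)
      (fun i => disjoint_facet_strictlyBelow α i Ω) (fun _ => filter_subset _ _)
      (filter_subset _ _) Q
  have hy : grmPr n D p {G | yEvent α G} =
      bernoulliPr p Ω ({G | G ∩ B = ∅ ∧ ∀ i, G ∩ facet α i Ω ∈ {H | H.Nonempty}} \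
        {G | G ∩ B = ∅ ∧ ∀ i, G ∩ facet α i Ω ∈ {H | #H = 1}}) :=
    (grmPr_eq_bernoulliPr n D p _).trans <| bernoulliPr_congr p Ω fun G hG => by
      simp [yEvent_iff, inter_facet α hG, inter_strictlyBelow α hG, B]
  have hcardF : ∀ i, #(facet α i Ω) = mfun (n - 1) ((a : ℤ) - n + 1) :=
    card_facet_degSet α hsum hge hn
  have hcardB : #B = mfun n ((a : ℤ) - n) := card_strictlyBelow_degSet α hsum hge (by omega)
  rw [hy, bernoulliPr_sdiff, hprob, hprob]
  · simp only [bernoulliPr_nonempty, bernoulliPr_card_eq_one, hcardF, hcardB, prod_const,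
      card_univ, Fintype.card_fin]
    ring
  · exact fun G ⟨hB, h⟩ => ⟨hB, fun i => card_pos.1 (by rw [h i]; omega)⟩

theorem prob_nonScarf_witness_event_eq
    (n D : ℕ) (hn : 2 ≤ n) (hD : 1 ≤ D) (p q : ℝ) (hp : p ∈ Set.Icc (0:ℝ) 1)
    (hq : q = 1 - p) (a : ℕ) (ha : 1 ≤ a) (α : Fin n → ℕ)
    (hsum : ∑ i, α i = D + a) (hge : ∀ i, a ≤ α i) :
    grmPr n D p {G | yEvent α G} =
      ((1 - q ^ mfun (n - 1) ((a : ℤ) - n + 1)) ^ n -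
        ((mfun (n - 1) ((a : ℤ) - n + 1) : ℝ) * p *
          q ^ (mfun (n - 1) ((a : ℤ) - n + 1) - 1)) ^ n) *
        q ^ mfun n ((a : ℤ) - n) :=
  prob_nonScarf_witness_event_eq_general n D hn p q hq a α hsum hge
end
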